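/- Suppose π is a proof of Γ ⇒_s Δ in G∞ℓK⁺_s + Cut and assume that either (1) π has finitely many instances of Cut, or (2) π has local cuts only. Then G∞ℓK⁺_s ⊢ Γ ⇒_s Δ. -/

import Mathlib

/-! Formulas of the modal language with ⊥, →, □ and the master modality ⊞. -/
inductive Fml : Type
  | var : ℕ → Fml
  | bot : Fml
  | imp : Fml → Fml → Fml
  | box : Fml → Fml
  | mbox : Fml → Fml

/-- The size of a formula (number of symbols). -/
def Fml.size : Fml → ℕ
  | .var _ => 1
  | .bot => 1
  | .imp a b => a.size + b.size + 1
  | .box a => a.size + 1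
  | .mbox a => a.size + 1

/-- Annotations: either a formula in focus or the symbol ∘ (unfocused). -/
inductive Ann : Type
  | o : Ann
  | fml : Fml → Ann

abbrev Msf := Multiset Fml

/-- `Γ, ⊞Γ`. -/
def dne (P : Msf) : Msf := P + P.map Fml.mbox

/-- An annotated sequent `Γ ⇒_s Δ`. -/
structure Sequent where
  left : Msf
  ann : Ann
  right : Msf

/-- The condition for being an annotated sequent: if the annotation is a formula `φ`
then `⊞φ` occurs on the right. -/
def Sequent.ok (S : Sequent) : Prop :=
  ∀ φ : Fml, S.ann = Ann.fml φ → Fml.mbox φ ∈ S.right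

/-- Rule tags: the rule applied at a node of a derivation tree, together with all the
data of the rule instance. -/
inductive Tag : Type
  | ax (Γ : Msf) (p : ℕ) (Δ : Msf) (s : Ann)
  | axBot (Γ : Msf) (Δ : Msf) (s : Ann)
  | impL (Γ : Msf) (φ ψ : Fml) (Δ : Msf) (s : Ann)
  | impR (Γ : Msf) (φ ψ : Fml) (Δ : Msf) (s : Ann)
  | box (Sg Γ P Δ : Msf) (φ : Fml) (s : Ann)
  | mboxF (Sg Γ P Δ : Msf) (φ : Fml)
  | mboxU (Sg Γ P Δ : Msf) (φ : Fml) (s : Ann)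
  | cut (Γ Δ : Msf) (χ : Fml) (s : Ann)

/-- Number of children (premises and witnesses) of each rule. -/
def Tag.arity : Tag → ℕ
  | .ax .. => 0
  | .axBot .. => 0
  | .impL .. => 2
  | .impR .. => 1
  | .box .. => 1
  | .mboxF .. => 2
  | .mboxU .. => 2
  | .cut .. => 2

/-- Conclusion sequent of a rule instance. -/
def Tag.concl : Tag → Sequent
  | .ax Γ p Δ s => ⟨Fml.var p ::ₘ Γ, s, Fml.var p ::ₘ Δ⟩
  | .axBot Γ Δ s => ⟨Fml.bot ::ₘ Γ, s, Δ⟩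
  | .impL Γ φ ψ Δ s => ⟨Fml.imp φ ψ ::ₘ Γ, s, Δ⟩
  | .impR Γ φ ψ Δ s => ⟨Γ, s, Fml.imp φ ψ ::ₘ Δ⟩
  | .box Sg Γ P Δ φ s => ⟨Sg + Γ.map Fml.box + P.map Fml.mbox, s, Fml.box φ ::ₘ Δ⟩
  | .mboxF Sg Γ P Δ φ => ⟨Sg + Γ.map Fml.box + P.map Fml.mbox, Ann.fml φ, Fml.mbox φ ::ₘ Δ⟩
  | .mboxU Sg Γ P Δ φ s => ⟨Sg + Γ.map Fml.box + P.map Fml.mbox, s, Fml.mbox φ ::ₘ Δ⟩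
  | .cut Γ Δ _ s => ⟨Γ, s, Δ⟩

/-- The `i`-th premise/witness sequent of a rule instance (junk value out of range). -/
def Tag.prem : Tag → ℕ → Sequent
  | .impL Γ φ _ Δ s, 0 => ⟨Γ, s, φ ::ₘ Δ⟩
  | .impL Γ _ ψ Δ s, 1 => ⟨ψ ::ₘ Γ, s, Δ⟩
  | .impR Γ φ ψ Δ s, 0 => ⟨φ ::ₘ Γ, s, ψ ::ₘ Δ⟩
  | .box _ Γ P _ φ _, 0 => ⟨Γ + dne P, Ann.o, {φ}⟩
  | .mboxF _ Γ P _ φ, 0 => ⟨Γ + dne P, Ann.o, {φ}⟩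
  | .mboxF _ Γ P _ φ, 1 => ⟨Γ + dne P, Ann.fml φ, {Fml.mbox φ}⟩
  | .mboxU _ Γ P _ φ _, 0 => ⟨Γ + dne P, Ann.o, {φ}⟩
  | .mboxU _ Γ P _ φ _, 1 => ⟨Γ + dne P, Ann.fml φ, {Fml.mbox φ}⟩
  | .cut Γ Δ χ s, 0 => ⟨Γ, s, χ ::ₘ Δ⟩
  | .cut Γ Δ χ s, 1 => ⟨χ ::ₘ Γ, s, Δ⟩
  | _, _ => ⟨0, Ann.o, 0⟩

/-- Side conditions: `⊞_u` is applicable only when `s ≠ φ`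
(`⊞_f` has `s = φ` built into its conclusion). -/
def Tag.sideOk : Tag → Prop
  | .mboxU _ _ _ _ φ s => s ≠ Ann.fml φ
  | _ => True

/-- Which children are witnesses (proofs in a strictly lower-indexed system). -/
def Tag.witness : Tag → ℕ → Bool
  | .box .., 0 => true
  | .mboxF .., 0 => true
  | .mboxU .., 0 => true
  | .mboxU .., 1 => true
  | _, _ => false

/-- Progress occurs exactly at the right premise of `⊞_f`. -/
def Tag.progress : Tag → ℕ → Bool
  | .mboxF .., 1 => true
  | _, _ => false

/-- Whether a node is a cut. -/
def Tag.isCut : Tag → Prop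
  | .cut .. => True
  | _ => False

/-- The cut formula of a cut node. -/
def Tag.cutFml : Tag → Option Fml
  | .cut _ _ χ _ => some χ
  | _ => none

/-- A (possibly non-wellfounded) derivation tree: a partial labelling of addresses by
rule instances.  Witnesses (and witnesses of witnesses, and so on) are included as
subtrees hanging off witness edges. -/
structure PreProof : Type where
  label : List ℕ → Option Tag

/-- Natural (Hessenberg) addition of ordinals, as defined in the older Mathlib. -/
noncomputable def Ordinal.nadd (a b : Ordinal) : Ordinal :=
  max (⨆ x : Set.Iio a, Order.succ (Ordinal.nadd x.1 b))
    (⨆ x : Set.Iio b, Order.succ (Ordinal.nadd a x.1))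
termination_by (a, b)
decreasing_by all_goals cases x; decreasing_tactic

namespace PreProof

def dom (π : PreProof) (a : List ℕ) : Prop := π.label a ≠ none

/-- Local well-formedness of a derivation tree. -/
structure Wf (π : PreProof) : Prop where
  root : π.dom []
  prefixClosed : ∀ a i, π.dom (a ++ [i]) → π.dom a
  arity : ∀ a t, π.label a = some t → ∀ i : ℕ, (π.dom (a ++ [i]) ↔ i < t.arity)
  coherent : ∀ a t i ti, π.label a = some t → π.label (a ++ [i]) = some ti →
    ti.concl = t.prem i
  seqOk : ∀ a t, π.label a = some t → t.concl.ok
  side : ∀ a t, π.label a = some t → t.sideOk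

/-- The address of the `n`-th node along the branch `f`. -/
def branchPrefix (f : ℕ → ℕ) (n : ℕ) : List ℕ := (List.range n).map f

/-- `f` is an infinite branch of `π`. -/
def IsBranch (π : PreProof) (f : ℕ → ℕ) : Prop := ∀ n, π.dom (branchPrefix f n)

/-- Every infinite branch crosses progress edges or witness edges infinitely often
(together with the ordinal labelling below, this says every infinite branch of each of
the stratified systems makes progress infinitely often). -/
def ProgressCond (π : PreProof) : Prop :=
  ∀ f : ℕ → ℕ, π.IsBranch f → ∀ N : ℕ, ∃ n, N ≤ n ∧ ∃ t,
    π.label (branchPrefix f n) = some t ∧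
    (t.progress (f n) = true ∨ t.witness (f n) = true)

/-- `π` carries an ordinal labelling witnessing that it is a proof of the system indexed
by `α`: witnesses live in systems of strictly smaller index. -/
def OrdOk (π : PreProof) (α : Ordinal.{0}) : Prop :=
  ∃ ord : List ℕ → Ordinal.{0}, ord [] = α ∧
    ∀ a t (i : ℕ), π.label a = some t → π.dom (a ++ [i]) →
      (t.witness i = true → ord (a ++ [i]) < ord a) ∧
      (t.witness i = false → ord (a ++ [i]) = ord a)

/-- `π` is a proof in `α`-G∞ℓK⁺ + Cut. -/
def IsProofLe (π : PreProof) (α : Ordinal.{0}) : Prop :=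
  π.Wf ∧ π.ProgressCond ∧ π.OrdOk α

/-- `π` is a proof in G∞ℓK⁺ + Cut. -/
def IsProof (π : PreProof) : Prop := π.Wf ∧ π.ProgressCond ∧ ∃ α, π.OrdOk α

/-- `‖π‖`: the least `α` such that `π` is a proof in the `α`-indexed system. -/
noncomputable def height (π : PreProof) : Ordinal.{0} := sInf {α : Ordinal.{0} | π.OrdOk α}

/-- Cut-free (everywhere: in the main fragment, witnesses, witnesses of witnesses, …). -/
def CutFree (π : PreProof) : Prop := ∀ a t, π.label a = some t → ¬ t.isCut

/-- `π` proves the sequent `S`. -/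
def Concl (π : PreProof) (S : Sequent) : Prop :=
  ∃ t, π.label [] = some t ∧ t.concl = S

/-- The subtree at address `a`. -/
def sub (π : PreProof) (a : List ℕ) : PreProof := ⟨fun b => π.label (a ++ b)⟩

/-- `a` belongs to the main global fragment: the path to `a` crosses no witness edges. -/
def inMainGlobal (π : PreProof) (a : List ℕ) : Prop :=
  π.dom a ∧ ∀ b i, (b ++ [i]) <+: a → ∀ t, π.label b = some t → t.witness i = false

/-- `a` belongs to the main local fragment: the path to `a` crosses no witness edges
and no progress edges. -/
def inMainLocal (π : PreProof) (a : List ℕ) : Prop :=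
  π.dom a ∧ ∀ b i, (b ++ [i]) <+: a → ∀ t, π.label b = some t →
    t.witness i = false ∧ t.progress i = false

/-- All cuts occur in the main global fragment (the shape of proofs with mCut:
witnesses are cut-free). -/
def MCutShape (π : PreProof) : Prop :=
  ∀ a t, π.label a = some t → t.isCut → π.inMainGlobal a

/-- No cuts occur in the main global fragment (the shape of proofs with wCut). -/
def WCutShape (π : PreProof) : Prop :=
  ∀ a t, π.label a = some t → t.isCut → ¬ π.inMainGlobal a

/-- No cuts in the main local fragment. -/
def NoCutInMainLocal (π : PreProof) : Prop :=
  ∀ a t, π.label a = some t → t.isCut → ¬ π.inMainLocal a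

/-- `π` has local cuts only: it is a proof in G∞ℓK⁺ + mCut all of whose cuts occur
in its main local fragment. -/
def LocalCutsOnly (π : PreProof) : Prop :=
  π.IsProof ∧ ∀ a t, π.label a = some t → t.isCut → π.inMainLocal a

/-- `τ` is a witness of `π`: a subtree hanging off a witness edge from the main
global fragment. -/
def IsWitnessOf (τ π : PreProof) : Prop :=
  ∃ a t i, π.inMainGlobal a ∧ π.label a = some t ∧ t.witness i = true ∧
    τ = π.sub (a ++ [i])

/-- `|π|`: the local height, i.e. the height of the main local fragment. -/
noncomputable def localHeight (π : PreProof) : ℕ∞ :=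
  ⨆ a ∈ {a : List ℕ | π.inMainLocal a}, (a.length : ℕ∞)

/-- All cuts of `π` (including those in witnesses, witnesses of witnesses, …) have
size smaller than `n`. -/
def CutSizesLt (π : PreProof) (n : ℕ) : Prop :=
  ∀ a t χ, π.label a = some t → t.cutFml = some χ → χ.size < n

/-- `(⊞χ, α)`-unblocked: all cuts have cut formula `χ` or `⊞χ`, and cuts with cut
formula `⊞χ` have height at most `α` and cut-free subproofs at their premises. -/
def Unblocked (π : PreProof) (χ : Fml) (α : Ordinal.{0}) : Prop :=
  ∀ a t ψ, π.label a = some t → t.cutFml = some ψ →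
    (ψ = χ ∨ ψ = Fml.mbox χ) ∧
    (ψ = Fml.mbox χ →
      Ordinal.nadd (π.sub (a ++ [0])).height (π.sub (a ++ [1])).height ≤ α ∧
      (π.sub (a ++ [0])).CutFree ∧ (π.sub (a ++ [1])).CutFree)

end PreProof

/-- `G∞ℓK⁺_s ⊢ Γ ⇒_s Δ` (cut-free provability). -/
def Provable (Γ : Msf) (s : Ann) (Δ : Msf) : Prop :=
  ∃ π : PreProof, π.IsProof ∧ π.CutFree ∧ π.Concl ⟨Γ, s, Δ⟩

/-- `G∞ℓK⁺_s + Cut ⊢ Γ ⇒_s Δ`. -/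
def ProvableC (Γ : Msf) (s : Ann) (Δ : Msf) : Prop :=
  ∃ π : PreProof, π.IsProof ∧ π.Concl ⟨Γ, s, Δ⟩

/-- Cut admissibility for the formula `χ`. -/
def CutAdm (χ : Fml) : Prop :=
  ∀ (s : Ann) (Γ Δ : Msf), Provable Γ s (χ ::ₘ Δ) → Provable (χ ::ₘ Γ) s Δ →
    Provable Γ s Δ

/-- Cut admissibility for `χ` with cuts of height smaller than `α`. -/
def CutAdmBelow (χ : Fml) (α : Ordinal.{0}) : Prop :=
  ∀ (s : Ann) (Γ Δ : Msf) (π τ : PreProof),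
    π.IsProof → π.CutFree → π.Concl ⟨Γ, s, χ ::ₘ Δ⟩ →
    τ.IsProof → τ.CutFree → τ.Concl ⟨χ ::ₘ Γ, s, Δ⟩ →
    Ordinal.nadd π.height τ.height < α →
    Provable Γ s Δ

/-! Preservation properties of functions on proofs. -/

def PreservesOrdHeight (f : PreProof → PreProof) : Prop :=
  ∀ π : PreProof, π.IsProof → (f π).height ≤ π.height

def PreservesLocalHeight (f : PreProof → PreProof) : Prop :=
  ∀ π : PreProof, π.IsProof → (f π).localHeight ≤ π.localHeight

def PreservesCutSizes (f : PreProof → PreProof) : Prop :=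
  ∀ (n : ℕ) (π : PreProof), π.IsProof → π.CutSizesLt n → (f π).CutSizesLt n

def PreservesMainLocalCutFree (f : PreProof → PreProof) : Prop :=
  ∀ π : PreProof, π.IsProof → π.NoCutInMainLocal → (f π).NoCutInMainLocal

def PreservesCutLocality (f : PreProof → PreProof) : Prop :=
  ∀ π : PreProof, π.LocalCutsOnly → (f π).LocalCutsOnly

def PreservesWitnessCutLocality (f : PreProof → PreProof) : Prop :=
  ∀ π : PreProof, π.IsProof → (∀ τ : PreProof, τ.IsWitnessOf π → τ.LocalCutsOnly) →
    ∀ τ : PreProof, τ.IsWitnessOf (f π) → τ.LocalCutsOnly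

def WeaklyPreserving (f : PreProof → PreProof) : Prop :=
  PreservesLocalHeight f ∧ PreservesCutSizes f ∧
    PreservesMainLocalCutFree f ∧ PreservesCutLocality f

def StronglyPreserving (f : PreProof → PreProof) : Prop :=
  WeaklyPreserving f ∧ PreservesOrdHeight f ∧ PreservesWitnessCutLocality f

/-! # Auxiliary development: semantic cut elimination -/

deriving instance DecidableEq for Fml

namespace CE

/-- Sequent-level provability in the cut-free system. -/
def Prov (S : Sequent) : Prop := ∃ π : PreProof, π.IsProof ∧ π.CutFree ∧ π.Concl S

/-- Kripke models. -/
structure KM : Type 1 where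
  W : Type
  R : W → W → Prop
  V : ℕ → W → Prop

/-- Satisfaction; `⊞φ` holds iff `φ` holds at every world reachable in ≥ 1 steps. -/
def KM.sat (M : KM) : M.W → Fml → Prop
  | _, .bot => False
  | w, .var p => M.V p w
  | w, .imp a b => M.sat w a → M.sat w b
  | w, .box a => ∀ v, M.R w v → M.sat v a
  | w, .mbox a => ∀ v, Relation.TransGen M.R w v → M.sat v a

/-- `w` refutes the sequent `S`. -/
def KM.refutes (M : KM) (w : M.W) (S : Sequent) : Prop :=
  (∀ φ ∈ S.left, M.sat w φ) ∧ (∀ φ ∈ S.right, ¬ M.sat w φ)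

/-- Semantic validity of a sequent (annotations are semantically irrelevant). -/
def SValid (S : Sequent) : Prop := ∀ (M : KM) (w : M.W), ¬ M.refutes w S

/-! ## Canonical modal decomposition of a multiset -/

def unbox : Fml → Option Fml | .box a => some a | _ => none
def unmbox : Fml → Option Fml | .mbox a => some a | _ => none
def nonModal : Fml → Prop | .box _ => False | .mbox _ => False | _ => True

instance : DecidablePred nonModal := by
  intro f; cases f <;> simp [nonModal] <;> infer_instance

/-- bodies of the boxed formulas in `X` -/
def boxes (X : Msf) : Msf := X.filterMap unbox
/-- bodies of the ⊞-formulas in `X` -/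
def mboxes (X : Msf) : Msf := X.filterMap unmbox
/-- non-modal part of `X` -/
def sg (X : Msf) : Msf := X.filter nonModal

section
variable (a : Fml) (X : Msf)

@[simp] lemma boxes_cons_box (φ : Fml) : boxes (Fml.box φ ::ₘ X) = φ ::ₘ boxes X :=
  Multiset.filterMap_cons_some _ _ _ rfl

@[simp] lemma mboxes_cons_mbox (φ : Fml) : mboxes (Fml.mbox φ ::ₘ X) = φ ::ₘ mboxes X :=
  Multiset.filterMap_cons_some _ _ _ rfl

end

lemma decomp (X : Msf) : X = sg X + (boxes X).map Fml.box + (mboxes X).map Fml.mbox := by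
  induction X using Multiset.induction with
  | empty => rfl
  | cons a X ih =>
    rcases a with p | _ | ⟨a, b⟩ | a | a
    case box =>
      have h1 : sg (Fml.box a ::ₘ X) = sg X := Multiset.filter_cons_of_neg _ (by simp [nonModal])
      have h3 : mboxes (Fml.box a ::ₘ X) = mboxes X := Multiset.filterMap_cons_none _ _ rfl
      rw [h1, boxes_cons_box, h3, Multiset.map_cons]
      rw [show sg X + (Fml.box a ::ₘ (boxes X).map Fml.box) + (mboxes X).map Fml.mbox
           = Fml.box a ::ₘ (sg X + (boxes X).map Fml.box + (mboxes X).map Fml.mbox) by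
        simp [Multiset.add_cons, Multiset.cons_add]]
      rw [← ih]
    case mbox =>
      have h1 : sg (Fml.mbox a ::ₘ X) = sg X := Multiset.filter_cons_of_neg _ (by simp [nonModal])
      have h2 : boxes (Fml.mbox a ::ₘ X) = boxes X := Multiset.filterMap_cons_none _ _ rfl
      rw [h1, h2, mboxes_cons_mbox, Multiset.map_cons, Multiset.add_cons]
      rw [← ih]
    case var =>
      have h1 : sg (Fml.var p ::ₘ X) = Fml.var p ::ₘ sg X :=
        Multiset.filter_cons_of_pos X (by trivial)
      have h2 : boxes (Fml.var p ::ₘ X) = boxes X := Multiset.filterMap_cons_none _ _ rfl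
      have h3 : mboxes (Fml.var p ::ₘ X) = mboxes X := Multiset.filterMap_cons_none _ _ rfl
      rw [h1, h2, h3, Multiset.cons_add, Multiset.cons_add, ← ih]
    case bot =>
      have h1 : sg (Fml.bot ::ₘ X) = Fml.bot ::ₘ sg X :=
        Multiset.filter_cons_of_pos X (by trivial)
      have h2 : boxes (Fml.bot ::ₘ X) = boxes X := Multiset.filterMap_cons_none _ _ rfl
      have h3 : mboxes (Fml.bot ::ₘ X) = mboxes X := Multiset.filterMap_cons_none _ _ rfl
      rw [h1, h2, h3, Multiset.cons_add, Multiset.cons_add, ← ih]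
    case imp =>
      have h1 : sg (Fml.imp a b ::ₘ X) = Fml.imp a b ::ₘ sg X :=
        Multiset.filter_cons_of_pos X (by trivial)
      have h2 : boxes (Fml.imp a b ::ₘ X) = boxes X := Multiset.filterMap_cons_none _ _ rfl
      have h3 : mboxes (Fml.imp a b ::ₘ X) = mboxes X := Multiset.filterMap_cons_none _ _ rfl
      rw [h1, h2, h3, Multiset.cons_add, Multiset.cons_add, ← ih]

/-! ## A generic machine producing cut-free proofs -/

lemma exists_ordFun (τ : PreProof) : ∃ ord : List ℕ → Ordinal.{0},
    (∃ α, τ.OrdOk α) →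
    ∀ a t (i : ℕ), τ.label a = some t → τ.dom (a ++ [i]) →
      (t.witness i = true → ord (a ++ [i]) < ord a) ∧
      (t.witness i = false → ord (a ++ [i]) = ord a) := by
  by_cases h : ∃ ord : List ℕ → Ordinal.{0},
      ∀ a t (i : ℕ), τ.label a = some t → τ.dom (a ++ [i]) →
        (t.witness i = true → ord (a ++ [i]) < ord a) ∧
        (t.witness i = false → ord (a ++ [i]) = ord a)
  · exact ⟨h.choose, fun _ => h.choose_spec⟩
  · refine ⟨fun _ => 0, fun hα => absurd ?_ h⟩
    obtain ⟨α, ord, -, hord⟩ := hα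
    exact ⟨ord, hord⟩

noncomputable def ordOf (τ : PreProof) : List ℕ → Ordinal.{0} := (exists_ordFun τ).choose

lemma ordOf_spec (τ : PreProof) (hτ : ∃ α, τ.OrdOk α) :
    ∀ a t (i : ℕ), τ.label a = some t → τ.dom (a ++ [i]) →
      (t.witness i = true → ordOf τ (a ++ [i]) < ordOf τ a) ∧
      (t.witness i = false → ordOf τ (a ++ [i]) = ordOf τ a) :=
  (exists_ordFun τ).choose_spec hτ

section mkOrd
variable (π : PreProof) (g : List ℕ → Ordinal.{0})

/-- fragment-entry value of `g`, on reversed addresses. -/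
noncomputable def mkOrdRev : List ℕ → Ordinal.{0}
  | [] => g []
  | i :: r =>
    @Option.rec Tag (fun _ => Ordinal.{0}) 0
      (fun t => if t.witness i then g (r.reverse ++ [i]) else mkOrdRev r)
      (π.label r.reverse)

noncomputable def mkOrd : List ℕ → Ordinal.{0} := fun a => mkOrdRev π g a.reverse

@[simp] lemma mkOrd_nil : mkOrd π g [] = g [] := rfl

lemma mkOrd_snoc (b : List ℕ) (i : ℕ) {t : Tag} (ht : π.label b = some t) :
    mkOrd π g (b ++ [i]) = if t.witness i then g (b ++ [i]) else mkOrd π g b := by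
  show mkOrdRev π g ((b ++ [i]).reverse) = _
  rw [List.reverse_append]
  show mkOrdRev π g (i :: b.reverse) = _
  rw [mkOrdRev, List.reverse_reverse, ht]
  rfl

end mkOrd

/-- Generic criterion: a `≤`-antitone labelling strict at witness edges yields `OrdOk`. -/
theorem ordok_of_g (π : PreProof) (pc : ∀ a i, π.dom (a ++ [i]) → π.dom a)
    (g : List ℕ → Ordinal.{0})
    (hg : ∀ a t (i : ℕ), π.label a = some t → π.dom (a ++ [i]) →
      (t.witness i = true → g (a ++ [i]) < g a) ∧
      (t.witness i = false → g (a ++ [i]) ≤ g a)) :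
    π.OrdOk (g []) := by
  have hinv : ∀ a, π.dom a → g a ≤ mkOrd π g a := by
    intro a
    induction a using List.reverseRecOn with
    | nil => intro _; simp
    | append_singleton b i ih =>
      intro hd
      have hdb : π.dom b := pc b i hd
      obtain ⟨t, ht⟩ : ∃ t, π.label b = some t := by
        rcases h : π.label b with _ | t
        · exact absurd h hdb
        · exact ⟨t, rfl⟩
      rw [mkOrd_snoc π g b i ht]
      rcases hw : t.witness i with _ | _
      · rw [if_neg Bool.false_ne_true]
        exact le_trans ((hg b t i ht hd).2 hw) (ih hdb)
      · rw [if_pos rfl]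
  refine ⟨mkOrd π g, by simp, ?_⟩
  intro a t i ht hd
  constructor
  · intro hw
    rw [mkOrd_snoc π g a i ht, if_pos hw]
    exact lt_of_lt_of_le ((hg a t i ht hd).1 hw) (hinv a (by rw [PreProof.dom, ht]; simp))
  · intro hw
    rw [mkOrd_snoc π g a i ht, if_neg (by rw [hw]; exact Bool.false_ne_true)]

/-! ### the machine -/

structure Mach : Type 1 where
  St : Type
  step : St → (Tag × (ℕ → St)) ⊕ PreProof
  C : St → Sequent
  mu : St → ℕ
  h1 : ∀ s t ch, step s = .inl (t, ch) → t.concl = C s ∧ t.concl.ok ∧ t.sideOk ∧ ¬ t.isCut ∧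
        ∀ i, i < t.arity → C (ch i) = t.prem i
  h2 : ∀ s τ, step s = .inr τ → τ.IsProof ∧ τ.CutFree ∧ τ.Concl (C s)
  h3 : ∀ s t ch i, step s = .inl (t, ch) → i < t.arity → t.witness i = false →
        t.progress i = false → mu (ch i) < mu s
  h4 : ∀ s t ch i, step s = .inl (t, ch) → i < t.arity → t.witness i = true →
        ∃ τ, step (ch i) = .inr τ

namespace Mach

variable (M : Mach)

def run : M.St → List ℕ → Option Tag
  | s, a =>
    match M.step s with
    | .inr τ => τ.label a
    | .inl (t, ch) =>
      match a with
      | [] => some t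
      | i :: rest => if i < t.arity then run (ch i) rest else none
  termination_by s a => a.length

variable {M}

lemma run_inr {s : M.St} {τ : PreProof} (h : M.step s = .inr τ) (a : List ℕ) :
    M.run s a = τ.label a := by
  rw [run, h]

lemma run_nil {s : M.St} {t ch} (h : M.step s = .inl (t, ch)) :
    M.run s [] = some t := by
  rw [run, h]

lemma run_cons {s : M.St} {t ch} (h : M.step s = .inl (t, ch)) (i : ℕ) (rest : List ℕ) :
    M.run s (i :: rest) = if i < t.arity then M.run (ch i) rest else none := by
  rw [run, h]

variable (M)

/-- the proof produced by the machine started at `s`. -/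
def pp (s : M.St) : PreProof := ⟨M.run s⟩

variable {M}

lemma pp_inr {s : M.St} {τ : PreProof} (h : M.step s = .inr τ) : M.pp s = τ := by
  show (⟨M.run s⟩ : PreProof) = τ
  have : M.run s = τ.label := funext (run_inr h)
  rw [this]

lemma run_root (s : M.St) : M.run s [] ≠ none := by
  rcases h : M.step s with ⟨t, ch⟩ | τ
  · rw [run_nil h]; simp
  · rw [run_inr h]; exact (M.h2 s τ h).1.1.root

lemma run_prefix (s : M.St) : ∀ (a : List ℕ) (i : ℕ),
    M.run s (a ++ [i]) ≠ none → M.run s a ≠ none := by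
  intro a
  induction a generalizing s with
  | nil => intro i _; exact run_root s
  | cons j rest ih =>
    intro i h
    rcases hs : M.step s with ⟨t, ch⟩ | τ
    · rw [List.cons_append, run_cons hs] at h
      rcases Nat.lt_or_ge j t.arity with hj | hj
      · rw [if_pos hj] at h
        rw [run_cons hs, if_pos hj]
        exact ih (ch j) i h
      · rw [if_neg (Nat.not_lt.2 hj)] at h; exact absurd rfl h
    · rw [run_inr hs] at h ⊢
      exact (M.h2 s τ hs).1.1.prefixClosed (j :: rest) i h

lemma run_arity (s : M.St) : ∀ (a : List ℕ) t', M.run s a = some t' →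
    ∀ i : ℕ, (M.run s (a ++ [i]) ≠ none ↔ i < t'.arity) := by
  intro a
  induction a generalizing s with
  | nil =>
    intro t' h i
    rcases hs : M.step s with ⟨t, ch⟩ | τ
    · rw [run_nil hs] at h
      obtain rfl : t = t' := by injection h
      show M.run s ([] ++ [i]) ≠ none ↔ _
      rw [List.nil_append, run_cons hs]
      rcases Nat.lt_or_ge i t.arity with hj | hj
      · rw [if_pos hj]
        simp only [hj, iff_true]
        exact run_root (ch i)
      · rw [if_neg (Nat.not_lt.2 hj)]
        simp [Nat.not_lt.2 hj]
    · rw [run_inr hs] at h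
      have := (M.h2 s τ hs).1.1.arity [] t' h i
      rw [run_inr hs]
      exact this
  | cons j rest ih =>
    intro t' h i
    rcases hs : M.step s with ⟨t, ch⟩ | τ
    · rw [run_cons hs] at h
      rcases Nat.lt_or_ge j t.arity with hj | hj
      · rw [if_pos hj] at h
        rw [List.cons_append, run_cons hs, if_pos hj]
        exact ih (ch j) t' h i
      · rw [if_neg (Nat.not_lt.2 hj)] at h; exact absurd h (by simp)
    · rw [run_inr hs] at h
      have := (M.h2 s τ hs).1.1.arity (j :: rest) t' h i
      rw [run_inr hs]
      exact this

lemma run_coherent (s : M.St) : ∀ (a : List ℕ) t' (i : ℕ) ti, M.run s a = some t' →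
    M.run s (a ++ [i]) = some ti → ti.concl = t'.prem i := by
  intro a
  induction a generalizing s with
  | nil =>
    intro t' i ti h hi
    rcases hs : M.step s with ⟨t, ch⟩ | τ
    · rw [run_nil hs] at h
      obtain rfl : t = t' := by injection h
      rw [List.nil_append, run_cons hs] at hi
      rcases Nat.lt_or_ge i t.arity with hj | hj
      · rw [if_pos hj] at hi
        have hC : M.C (ch i) = t.prem i := (M.h1 s t ch hs).2.2.2.2 i hj
        rcases hc : M.step (ch i) with ⟨t₂, ch₂⟩ | τ
        · rw [run_nil hc] at hi
          obtain rfl : t₂ = ti := by injection hi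
          rw [← hC]; exact (M.h1 (ch i) t₂ ch₂ hc).1
        · rw [run_inr hc] at hi
          obtain ⟨t₃, h₃, hc₃⟩ := (M.h2 (ch i) τ hc).2.2
          rw [h₃] at hi
          obtain rfl : t₃ = ti := by injection hi
          rw [← hC]; exact hc₃
      · rw [if_neg (Nat.not_lt.2 hj)] at hi; exact absurd hi (by simp)
    · rw [run_inr hs] at h
      rw [run_inr hs] at hi
      exact (M.h2 s τ hs).1.1.coherent [] t' i ti h hi
  | cons j rest ih =>
    intro t' i ti h hi
    rcases hs : M.step s with ⟨t, ch⟩ | τ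
    · rw [run_cons hs] at h
      rcases Nat.lt_or_ge j t.arity with hj | hj
      · rw [if_pos hj] at h
        rw [List.cons_append, run_cons hs, if_pos hj] at hi
        exact ih (ch j) t' i ti h hi
      · rw [if_neg (Nat.not_lt.2 hj)] at h; exact absurd h (by simp)
    · rw [run_inr hs] at h
      rw [run_inr hs] at hi
      exact (M.h2 s τ hs).1.1.coherent (j :: rest) t' i ti h hi

lemma run_tagprop (s : M.St) : ∀ (a : List ℕ) t', M.run s a = some t' →
    t'.concl.ok ∧ t'.sideOk ∧ ¬ t'.isCut := by
  intro a
  induction a generalizing s with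
  | nil =>
    intro t' h
    rcases hs : M.step s with ⟨t, ch⟩ | τ
    · rw [run_nil hs] at h
      obtain rfl : t = t' := by injection h
      obtain ⟨-, h2, h3, h4, -⟩ := M.h1 s t ch hs
      exact ⟨h2, h3, h4⟩
    · rw [run_inr hs] at h
      obtain ⟨hp, hcf, -⟩ := M.h2 s τ hs
      exact ⟨hp.1.seqOk [] t' h, hp.1.side [] t' h, hcf [] t' h⟩
  | cons j rest ih =>
    intro t' h
    rcases hs : M.step s with ⟨t, ch⟩ | τ
    · rw [run_cons hs] at h
      rcases Nat.lt_or_ge j t.arity with hj | hj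
      · rw [if_pos hj] at h
        exact ih (ch j) t' h
      · rw [if_neg (Nat.not_lt.2 hj)] at h; exact absurd h (by simp)
    · rw [run_inr hs] at h
      obtain ⟨hp, hcf, -⟩ := M.h2 s τ hs
      exact ⟨hp.1.seqOk _ t' h, hp.1.side _ t' h, hcf _ t' h⟩

end Mach
/-! ### branch bookkeeping -/

lemma bp_succ (f : ℕ → ℕ) (k : ℕ) :
    PreProof.branchPrefix f (k + 1) = f 0 :: PreProof.branchPrefix (fun j => f (j + 1)) k := by
  show (List.range (k+1)).map f = _
  rw [List.range_succ_eq_map]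
  simp [PreProof.branchPrefix, List.map_map, Function.comp_def, Nat.succ_eq_add_one,
    Nat.add_comm]

lemma bp_add (f : ℕ → ℕ) (m k : ℕ) :
    PreProof.branchPrefix f (m + k) =
      PreProof.branchPrefix f m ++ PreProof.branchPrefix (fun j => f (m + j)) k := by
  show (List.range (m+k)).map f = _
  rw [List.range_add]
  simp [PreProof.branchPrefix, List.map_map, Function.comp_def]

lemma bp_take (f : ℕ → ℕ) {m N : ℕ} (h : m ≤ N) :
    (PreProof.branchPrefix f N).take m = PreProof.branchPrefix f m := by
  show (List.map f (List.range N)).take m = _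
  rw [← List.map_take, List.take_range]
  show List.map f (List.range (min m N)) = _
  rw [Nat.min_eq_left h]
  rfl

lemma bp_one (f : ℕ → ℕ) : PreProof.branchPrefix f 1 = [f 0] := rfl

namespace Mach

variable {M : Mach}

lemma locate (s : M.St) : ∀ (a : List ℕ), M.run s a ≠ none →
    (∃ s', ∀ b, M.run s (a ++ b) = M.run s' b) ∨
    (∃ (a₁ : List ℕ) (τ : PreProof), a₁ <+: a ∧ τ.IsProof ∧ τ.CutFree ∧
      ∀ b, M.run s (a₁ ++ b) = τ.label b) := by
  intro a
  induction a generalizing s with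
  | nil => exact fun _ => Or.inl ⟨s, fun b => rfl⟩
  | cons j rest ih =>
    intro h
    rcases hs : M.step s with ⟨t, ch⟩ | τ
    · rw [run_cons hs] at h
      rcases Nat.lt_or_ge j t.arity with hj | hj
      · rw [if_pos hj] at h
        rcases ih (ch j) h with ⟨s', he⟩ | ⟨a₁, τ, hpre, hp, hcf, he⟩
        · exact Or.inl ⟨s', fun b => by
            rw [List.cons_append, run_cons hs, if_pos hj, he b]⟩
        · exact Or.inr ⟨j :: a₁, τ, (List.prefix_cons_inj j).2 hpre, hp, hcf, fun b => by
            rw [List.cons_append, run_cons hs, if_pos hj, he b]⟩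
      · rw [if_neg (Nat.not_lt.2 hj)] at h; exact absurd rfl h
    · exact Or.inr ⟨[], τ, List.nil_prefix, (M.h2 s τ hs).1, (M.h2 s τ hs).2.1,
        fun b => run_inr hs b⟩

lemma exists_event : ∀ (n : ℕ) (s : M.St), M.mu s ≤ n →
    ∀ g, (M.pp s).IsBranch g →
    ∃ k t, M.run s (PreProof.branchPrefix g k) = some t ∧
      (t.progress (g k) = true ∨ t.witness (g k) = true) := by
  intro n
  induction n with
  | zero =>
    intro s hmu g hg
    rcases hs : M.step s with ⟨t, ch⟩ | τ
    · by_cases hev : t.progress (g 0) = true ∨ t.witness (g 0) = true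
      · exact ⟨0, t, run_nil hs, hev⟩
      · push_neg at hev
        have h1 : (M.pp s).dom (PreProof.branchPrefix g 1) := hg 1
        rw [bp_one] at h1
        have hdom : M.run s [g 0] ≠ none := h1
        rw [show [g 0] = [] ++ [g 0] by rfl] at hdom
        have hlt : g 0 < t.arity := (run_arity s [] t (run_nil hs) (g 0)).1 hdom
        have := M.h3 s t ch (g 0) hs hlt (Bool.eq_false_iff.2 hev.2)
          (Bool.eq_false_iff.2 hev.1)
        omega
    · obtain ⟨-, hpc, -⟩ := (M.h2 s τ hs).1
      have hbτ : τ.IsBranch g := by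
        intro k
        have := hg k
        show τ.label _ ≠ none
        rw [← run_inr hs]
        exact this
      obtain ⟨k, -, t, ht, hev⟩ := hpc g hbτ 0
      exact ⟨k, t, by rw [run_inr hs]; exact ht, hev⟩
  | succ m ih =>
    intro s hmu g hg
    rcases hs : M.step s with ⟨t, ch⟩ | τ
    · by_cases hev : t.progress (g 0) = true ∨ t.witness (g 0) = true
      · exact ⟨0, t, run_nil hs, hev⟩
      · push_neg at hev
        have h1 : (M.pp s).dom (PreProof.branchPrefix g 1) := hg 1
        rw [bp_one] at h1
        have hdom : M.run s [g 0] ≠ none := h1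
        rw [show [g 0] = [] ++ [g 0] by rfl] at hdom
        have hlt : g 0 < t.arity := (run_arity s [] t (run_nil hs) (g 0)).1 hdom
        have hμ := M.h3 s t ch (g 0) hs hlt (Bool.eq_false_iff.2 hev.2)
          (Bool.eq_false_iff.2 hev.1)
        -- recurse into child
        set g' : ℕ → ℕ := fun j => g (j + 1) with hg'
        have hrun : ∀ k, M.run (ch (g 0)) (PreProof.branchPrefix g' k)
            = M.run s (PreProof.branchPrefix g (k + 1)) := by
          intro k
          rw [bp_succ, run_cons hs, if_pos hlt]
        have hb' : (M.pp (ch (g 0))).IsBranch g' := by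
          intro k
          show M.run (ch (g 0)) _ ≠ none
          rw [hrun k]
          exact hg (k + 1)
        obtain ⟨k, t', ht', hev'⟩ := ih (ch (g 0)) (by omega) g' hb'
        exact ⟨k + 1, t', by rw [← hrun k]; exact ht', hev'⟩
    · obtain ⟨-, hpc, -⟩ := (M.h2 s τ hs).1
      have hbτ : τ.IsBranch g := by
        intro k
        have := hg k
        show τ.label _ ≠ none
        rw [← run_inr hs]
        exact this
      obtain ⟨k, -, t, ht, hev⟩ := hpc g hbτ 0
      exact ⟨k, t, by rw [run_inr hs]; exact ht, hev⟩

lemma pp_progress (s : M.St) : (M.pp s).ProgressCond := by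
  intro f hf N
  have h : M.run s (PreProof.branchPrefix f N) ≠ none := hf N
  rcases locate s _ h with ⟨s', he⟩ | ⟨a₁, τ, hpre, hp, hcf, he⟩
  · set g : ℕ → ℕ := fun j => f (N + j) with hgdef
    have hrun : ∀ k, M.run s' (PreProof.branchPrefix g k)
        = M.run s (PreProof.branchPrefix f (N + k)) := by
      intro k
      rw [bp_add f N k, he]
    have hb : (M.pp s').IsBranch g := by
      intro k
      show M.run s' _ ≠ none
      rw [hrun k]
      exact hf (N + k)
    obtain ⟨k, t, ht, hev⟩ := exists_event (M.mu s') s' le_rfl g hb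
    refine ⟨N + k, Nat.le_add_right N k, t, ?_, hev⟩
    show M.run s _ = some t
    rw [← hrun k]; exact ht
  · obtain ⟨a₂, ha⟩ := hpre
    have hmN : a₁.length ≤ N := by
      have := congrArg List.length ha
      simp only [List.length_append] at this
      have hN : (PreProof.branchPrefix f N).length = N := by
        simp [PreProof.branchPrefix]
      omega
    have ha₁ : a₁ = PreProof.branchPrefix f a₁.length := by
      rw [← bp_take f hmN, ← ha, List.take_left]
    set m := a₁.length
    set g : ℕ → ℕ := fun j => f (m + j) with hgdef
    have hrun : ∀ k, τ.label (PreProof.branchPrefix g k)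
        = M.run s (PreProof.branchPrefix f (m + k)) := by
      intro k
      rw [bp_add f m k, ← ha₁, he]
    have hb : τ.IsBranch g := by
      intro k
      show τ.label _ ≠ none
      rw [hrun k]
      exact hf (m + k)
    obtain ⟨k, hk, t, ht, hev⟩ := hp.2.1 g hb N
    refine ⟨m + k, le_trans hk (Nat.le_add_left k m), t, ?_, hev⟩
    show M.run s _ = some t
    rw [← hrun k]; exact ht

/-! ### ordinal labelling -/

variable (M)

noncomputable def G0 : Ordinal.{0} :=
  ⨆ s : M.St, Sum.rec (fun _ => (0 : Ordinal.{0})) (fun τ => ordOf τ [] + 1) (M.step s)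

noncomputable def gfun : M.St → List ℕ → Ordinal.{0}
  | s, a =>
    match M.step s with
    | .inr τ => ordOf τ a
    | .inl (t, ch) =>
      match a with
      | [] => M.G0
      | i :: rest => if i < t.arity then gfun (ch i) rest else 0
  termination_by s a => a.length

variable {M}

lemma gfun_inr {s : M.St} {τ : PreProof} (h : M.step s = .inr τ) (a : List ℕ) :
    M.gfun s a = ordOf τ a := by
  rw [gfun, h]

lemma gfun_nil {s : M.St} {t ch} (h : M.step s = .inl (t, ch)) :
    M.gfun s [] = M.G0 := by
  rw [gfun, h]

lemma gfun_cons {s : M.St} {t ch} (h : M.step s = .inl (t, ch)) (i : ℕ) (rest : List ℕ) :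
    M.gfun s (i :: rest) = if i < t.arity then M.gfun (ch i) rest else 0 := by
  rw [gfun, h]

lemma G0_bound {s : M.St} {τ : PreProof} (h : M.step s = .inr τ) :
    ordOf τ [] < M.G0 := by
  have hle : Sum.rec (fun _ => (0 : Ordinal.{0})) (fun τ => ordOf τ [] + 1) (M.step s)
      ≤ M.G0 := le_ciSup (Ordinal.bddAbove_range _) s
  rw [h] at hle
  exact lt_of_lt_of_le (lt_add_one _) hle

lemma gfun_cond (s : M.St) : ∀ (a : List ℕ) t (i : ℕ), M.run s a = some t →
    M.run s (a ++ [i]) ≠ none →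
    (t.witness i = true → M.gfun s (a ++ [i]) < M.gfun s a) ∧
    (t.witness i = false → M.gfun s (a ++ [i]) ≤ M.gfun s a) := by
  intro a
  induction a generalizing s with
  | nil =>
    intro t i h hd
    rcases hs : M.step s with ⟨t', ch⟩ | τ
    · rw [run_nil hs] at h
      obtain rfl : t' = t := by injection h
      rw [List.nil_append] at hd
      rw [run_cons hs] at hd
      have hlt : i < t'.arity := by
        by_contra hh
        rw [if_neg hh] at hd
        exact hd rfl
      rw [if_pos hlt] at hd
      have hnil : M.gfun s [] = M.G0 := gfun_nil hs
      have hcons : M.gfun s ([] ++ [i]) = M.gfun (ch i) [] := by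
        rw [List.nil_append, gfun_cons hs, if_pos hlt]
      rcases hc : M.step (ch i) with ⟨t₂, ch₂⟩ | τ'
      · constructor
        · intro hw
          obtain ⟨τ'', hτ''⟩ := M.h4 s t' ch i hs hlt hw
          rw [hτ''] at hc
          exact absurd hc (by simp)
        · intro _
          rw [hnil, hcons, gfun_nil hc]
      · have hlt2 : ordOf τ' [] < M.G0 := G0_bound hc
        rw [hnil, hcons, gfun_inr hc]
        exact ⟨fun _ => hlt2, fun _ => le_of_lt hlt2⟩
    · rw [run_inr hs] at h
      have hdτ : τ.dom ([] ++ [i]) := by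
        show τ.label _ ≠ none
        rw [← run_inr hs]
        exact hd
      have := ordOf_spec τ (M.h2 s τ hs).1.2.2 [] t i h hdτ
      rw [gfun_inr hs, gfun_inr hs]
      exact ⟨this.1, fun hw => le_of_eq (this.2 hw)⟩
  | cons j rest ih =>
    intro t i h hd
    rcases hs : M.step s with ⟨t', ch⟩ | τ
    · rw [run_cons hs] at h
      rcases Nat.lt_or_ge j t'.arity with hj | hj
      · rw [if_pos hj] at h
        rw [List.cons_append, run_cons hs, if_pos hj] at hd
        have := ih (ch j) t i h hd
        rw [List.cons_append, gfun_cons hs, if_pos hj, gfun_cons hs, if_pos hj]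
        exact this
      · rw [if_neg (Nat.not_lt.2 hj)] at h; exact absurd h (by simp)
    · rw [run_inr hs] at h
      have hdτ : τ.dom ((j :: rest) ++ [i]) := by
        show τ.label _ ≠ none
        rw [← run_inr hs]
        exact hd
      have := ordOf_spec τ (M.h2 s τ hs).1.2.2 (j :: rest) t i h hdτ
      rw [gfun_inr hs, gfun_inr hs]
      exact ⟨this.1, fun hw => le_of_eq (this.2 hw)⟩

/-! ### the machine theorem -/

theorem prov (M : Mach) (s : M.St) : Prov (M.C s) := by
  refine ⟨M.pp s, ⟨⟨run_root s, run_prefix s, ?_, ?_, ?_, ?_⟩, pp_progress s,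
    ⟨M.gfun s [], ?_⟩⟩, ?_, ?_⟩
  · exact fun a t ht i => (run_arity s a t ht i)
  · exact fun a t i ti ht hti => run_coherent s a t i ti ht hti
  · exact fun a t ht => (run_tagprop s a t ht).1
  · exact fun a t ht => (run_tagprop s a t ht).2.1
  · exact ordok_of_g (M.pp s) (run_prefix s) (M.gfun s)
      (fun a t i ht hd => gfun_cond s a t i ht hd)
  · exact fun a t ht => (run_tagprop s a t ht).2.2
  · rcases hs : M.step s with ⟨t, ch⟩ | τ
    · exact ⟨t, run_nil hs, (M.h1 s t ch hs).1⟩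
    · obtain ⟨t, ht, hc⟩ := (M.h2 s τ hs).2.2
      refine ⟨t, ?_, hc⟩
      show M.run s [] = some t
      rw [run_inr hs]; exact ht

end Mach

/-! ## Local derivations and the loop-closure theorem -/

noncomputable def Prov.pf {S : Sequent} (h : Prov S) : PreProof := h.choose

lemma Prov.pf_spec {S : Sequent} (h : Prov S) :
    h.pf.IsProof ∧ h.pf.CutFree ∧ h.pf.Concl S := h.choose_spec

/-- Finite local derivations: witness premises must be provable outright, the
right premise of `⊞_f` may be provable or a "loop leaf" in `V`. -/
inductive LD (V : Set Sequent) : Sequent → Type where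
  | hyp (S : Sequent) (h : Prov S) : LD V S
  | ax (Γ : Msf) (p : ℕ) (Δ : Msf) (s : Ann) (hok : (Tag.ax Γ p Δ s).concl.ok) :
      LD V (Tag.ax Γ p Δ s).concl
  | axBot (Γ Δ : Msf) (s : Ann) (hok : (Tag.axBot Γ Δ s).concl.ok) :
      LD V (Tag.axBot Γ Δ s).concl
  | impL (Γ : Msf) (φ ψ : Fml) (Δ : Msf) (s : Ann) (hok : (Tag.impL Γ φ ψ Δ s).concl.ok)
      (k0 : LD V ⟨Γ, s, φ ::ₘ Δ⟩) (k1 : LD V ⟨ψ ::ₘ Γ, s, Δ⟩) :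
      LD V (Tag.impL Γ φ ψ Δ s).concl
  | impR (Γ : Msf) (φ ψ : Fml) (Δ : Msf) (s : Ann) (hok : (Tag.impR Γ φ ψ Δ s).concl.ok)
      (k : LD V ⟨φ ::ₘ Γ, s, ψ ::ₘ Δ⟩) : LD V (Tag.impR Γ φ ψ Δ s).concl
  | box (Sg Γ P Δ : Msf) (φ : Fml) (s : Ann) (hok : (Tag.box Sg Γ P Δ φ s).concl.ok)
      (w : Prov ⟨Γ + dne P, Ann.o, {φ}⟩) : LD V (Tag.box Sg Γ P Δ φ s).concl
  | mboxF (Sg Γ P Δ : Msf) (φ : Fml) (hok : (Tag.mboxF Sg Γ P Δ φ).concl.ok)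
      (w : Prov ⟨Γ + dne P, Ann.o, {φ}⟩)
      (k : PSum (Prov ⟨Γ + dne P, Ann.fml φ, {Fml.mbox φ}⟩)
        (⟨Γ + dne P, Ann.fml φ, {Fml.mbox φ}⟩ ∈ V)) : LD V (Tag.mboxF Sg Γ P Δ φ).concl
  | mboxU (Sg Γ P Δ : Msf) (φ : Fml) (s : Ann) (hok : (Tag.mboxU Sg Γ P Δ φ s).concl.ok)
      (hs : s ≠ Ann.fml φ) (w1 : Prov ⟨Γ + dne P, Ann.o, {φ}⟩)
      (w2 : Prov ⟨Γ + dne P, Ann.fml φ, {Fml.mbox φ}⟩) : LD V (Tag.mboxU Sg Γ P Δ φ s).concl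

namespace LD

def sz {V : Set Sequent} : ∀ {S : Sequent}, LD V S → ℕ
  | _, .hyp .. => 0
  | _, .ax .. => 0
  | _, .axBot .. => 0
  | _, .impL _ _ _ _ _ _ k0 k1 => k0.sz + k1.sz + 1
  | _, .impR _ _ _ _ _ _ k => k.sz + 1
  | _, .box .. => 0
  | _, .mboxF .. => 0
  | _, .mboxU .. => 0

end LD

section ldmach

variable (V : Set Sequent) (F : ∀ T, T ∈ V → LD V T)

noncomputable def ldStep : (Σ S : Sequent, LD V S) → (Tag × (ℕ → Σ S : Sequent, LD V S)) ⊕ PreProof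
  | ⟨_, .hyp _ h⟩ => .inr h.pf
  | ⟨_, .ax Γ p Δ s hok⟩ => .inl (Tag.ax Γ p Δ s, fun _ => ⟨_, .ax Γ p Δ s hok⟩)
  | ⟨_, .axBot Γ Δ s hok⟩ => .inl (Tag.axBot Γ Δ s, fun _ => ⟨_, .axBot Γ Δ s hok⟩)
  | ⟨_, .impL Γ φ ψ Δ s _ k0 k1⟩ =>
      .inl (Tag.impL Γ φ ψ Δ s, fun i => if i = 0 then ⟨_, k0⟩ else ⟨_, k1⟩)
  | ⟨_, .impR Γ φ ψ Δ s _ k⟩ => .inl (Tag.impR Γ φ ψ Δ s, fun _ => ⟨_, k⟩)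
  | ⟨_, .box Sg Γ P Δ φ s _ w⟩ => .inl (Tag.box Sg Γ P Δ φ s, fun _ => ⟨_, .hyp _ w⟩)
  | ⟨_, .mboxF Sg Γ P Δ φ _ w k⟩ =>
      .inl (Tag.mboxF Sg Γ P Δ φ, fun i => if i = 0 then ⟨_, .hyp _ w⟩ else
        (match k with
         | .inl p => ⟨_, .hyp _ p⟩
         | .inr hV => ⟨_, F _ hV⟩))
  | ⟨_, .mboxU Sg Γ P Δ φ s _ hs w1 w2⟩ =>
      .inl (Tag.mboxU Sg Γ P Δ φ s, fun i => if i = 0 then ⟨_, .hyp _ w1⟩ else ⟨_, .hyp _ w2⟩)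

noncomputable def ldMach : Mach where
  St := Σ S : Sequent, LD V S
  step := ldStep V F
  C := fun s => s.1
  mu := fun s => s.2.sz
  h1 := by
    rintro ⟨S, d⟩ t ch h
    cases d <;> simp only [ldStep] at h
    case hyp => cases h
    case ax Γ p Δ s hok =>
      injection h with h'
      injection h' with ht hch
      subst ht; subst hch
      refine ⟨rfl, hok, trivial, (by simp [Tag.isCut]), ?_⟩
      intro i hi
      simp only [Tag.arity] at hi
      omega
    case axBot Γ Δ s hok =>
      injection h with h'
      injection h' with ht hch
      subst ht; subst hch
      refine ⟨rfl, hok, trivial, (by simp [Tag.isCut]), ?_⟩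
      intro i hi
      simp only [Tag.arity] at hi
      omega
    case impL Γ φ ψ Δ s hok k0 k1 =>
      injection h with h'
      injection h' with ht hch
      subst ht; subst hch
      refine ⟨rfl, hok, trivial, (by simp [Tag.isCut]), ?_⟩
      intro i hi
      simp only [Tag.arity] at hi
      rcases i with _ | _ | i
      · simp [Tag.prem]
      · simp [Tag.prem]
      · omega
    case impR Γ φ ψ Δ s hok k =>
      injection h with h'
      injection h' with ht hch
      subst ht; subst hch
      refine ⟨rfl, hok, trivial, (by simp [Tag.isCut]), ?_⟩
      intro i hi
      simp only [Tag.arity] at hi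
      rcases i with _ | _ | i
      · simp [Tag.prem]
      · omega
      · omega
    case box Sg Γ P Δ φ s hok w =>
      injection h with h'
      injection h' with ht hch
      subst ht; subst hch
      refine ⟨rfl, hok, trivial, (by simp [Tag.isCut]), ?_⟩
      intro i hi
      simp only [Tag.arity] at hi
      rcases i with _ | _ | i
      · simp [Tag.prem]
      · omega
      · omega
    case mboxF Sg Γ P Δ φ hok w k =>
      injection h with h'
      injection h' with ht hch
      subst ht; subst hch
      refine ⟨rfl, hok, trivial, (by simp [Tag.isCut]), ?_⟩
      intro i hi
      simp only [Tag.arity] at hi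
      rcases i with _ | _ | i
      · simp [Tag.prem]
      · rcases k with p | hV <;> simp [Tag.prem]
      · omega
    case mboxU Sg Γ P Δ φ s hok hs w1 w2 =>
      injection h with h'
      injection h' with ht hch
      subst ht; subst hch
      refine ⟨rfl, hok, hs, (by simp [Tag.isCut]), ?_⟩
      intro i hi
      simp only [Tag.arity] at hi
      rcases i with _ | _ | i
      · simp [Tag.prem]
      · simp [Tag.prem]
      · omega
  h2 := by
    rintro ⟨S, d⟩ τ h
    cases d <;> simp only [ldStep] at h
    case hyp hp =>
      obtain rfl : hp.pf = τ := by injection h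
      exact hp.pf_spec
    all_goals cases h
  h3 := by
    rintro ⟨S, d⟩ t ch i h hi hw hp
    cases d <;> simp only [ldStep] at h
    case hyp => cases h
    case ax Γ p Δ s hok =>
      injection h with h'
      injection h' with ht hch
      subst ht; subst hch
      simp only [Tag.arity] at hi
      omega
    case axBot Γ Δ s hok =>
      injection h with h'
      injection h' with ht hch
      subst ht; subst hch
      simp only [Tag.arity] at hi
      omega
    case impL Γ φ ψ Δ s hok k0 k1 =>
      injection h with h'
      injection h' with ht hch
      subst ht; subst hch
      simp only [Tag.arity] at hi
      rcases i with _ | _ | i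
      · simp only []
        show (if (0:ℕ) = 0 then _ else _ : Σ S : Sequent, LD V S).2.sz < _
        rw [if_pos rfl]
        simp [LD.sz]
      · show (if (1:ℕ) = 0 then _ else _ : Σ S : Sequent, LD V S).2.sz < _
        rw [if_neg one_ne_zero]
        simp [LD.sz]
      · omega
    case impR Γ φ ψ Δ s hok k =>
      injection h with h'
      injection h' with ht hch
      subst ht; subst hch
      simp only [Tag.arity] at hi
      rcases i with _ | _ | i
      · simp [LD.sz]
      · omega
      · omega
    case box Sg Γ P Δ φ s hok w =>
      injection h with h'
      injection h' with ht hch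
      subst ht; subst hch
      simp only [Tag.arity] at hi
      rcases i with _ | i
      · simp [Tag.witness] at hw
      · omega
    case mboxF Sg Γ P Δ φ hok w k =>
      injection h with h'
      injection h' with ht hch
      subst ht; subst hch
      simp only [Tag.arity] at hi
      rcases i with _ | _ | i
      · simp [Tag.witness] at hw
      · simp [Tag.progress] at hp
      · omega
    case mboxU Sg Γ P Δ φ s hok hs w1 w2 =>
      injection h with h'
      injection h' with ht hch
      subst ht; subst hch
      simp only [Tag.arity] at hi
      rcases i with _ | _ | i
      · simp [Tag.witness] at hw
      · simp [Tag.witness] at hw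
      · omega
  h4 := by
    rintro ⟨S, d⟩ t ch i h hi hw
    cases d <;> simp only [ldStep] at h
    case hyp => cases h
    case ax Γ p Δ s hok =>
      injection h with h'
      injection h' with ht hch
      subst ht; subst hch
      simp only [Tag.arity] at hi
      omega
    case axBot Γ Δ s hok =>
      injection h with h'
      injection h' with ht hch
      subst ht; subst hch
      simp only [Tag.arity] at hi
      omega
    case impL Γ φ ψ Δ s hok k0 k1 =>
      injection h with h'
      injection h' with ht hch
      subst ht; subst hch
      simp only [Tag.arity] at hi
      rcases i with _ | _ | i
      · simp [Tag.witness] at hw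
      · simp [Tag.witness] at hw
      · omega
    case impR Γ φ ψ Δ s hok k =>
      injection h with h'
      injection h' with ht hch
      subst ht; subst hch
      simp only [Tag.arity] at hi
      rcases i with _ | _ | i
      · simp [Tag.witness] at hw
      · omega
      · omega
    case box Sg Γ P Δ φ s hok w =>
      injection h with h'
      injection h' with ht hch
      subst ht; subst hch
      simp only [Tag.arity] at hi
      rcases i with _ | _ | i
      · exact ⟨w.pf, rfl⟩
      · omega
      · omega
    case mboxF Sg Γ P Δ φ hok w k =>
      injection h with h'
      injection h' with ht hch
      subst ht; subst hch
      simp only [Tag.arity] at hi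
      rcases i with _ | _ | i
      · exact ⟨w.pf, rfl⟩
      · simp [Tag.witness] at hw
      · omega
    case mboxU Sg Γ P Δ φ s hok hs w1 w2 =>
      injection h with h'
      injection h' with ht hch
      subst ht; subst hch
      simp only [Tag.arity] at hi
      rcases i with _ | _ | i
      · exact ⟨w1.pf, rfl⟩
      · exact ⟨w2.pf, rfl⟩
      · omega

end ldmach

/-- THE closure theorem: a family of local derivations over `V` proves everything. -/
theorem mainClosure (V : Set Sequent) (F : ∀ T, T ∈ V → LD V T) {S : Sequent}
    (d : LD V S) : Prov S :=
  (ldMach V F).prov ⟨S, d⟩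

/-- Loop-free special case. -/
theorem prov_of_ld {S : Sequent} (d : LD ∅ S) : Prov S :=
  mainClosure ∅ (fun _ h => absurd h (Set.notMem_empty _)) d
/-! ## Soundness of the full system (with cut) -/

attribute [local instance 10] Classical.propDecidable

namespace KM

variable {M : KM}

def iterR (M : KM) : ℕ → M.W → M.W → Prop
  | 0, w, v => w = v
  | n + 1, w, v => ∃ u, M.R w u ∧ M.iterR n u v

lemma iterR_transGen : ∀ {n : ℕ} {w v : M.W}, M.iterR (n + 1) w v → Relation.TransGen M.R w v := by
  intro n
  induction n with
  | zero =>
    rintro w v ⟨u, hR, hu⟩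
    cases hu
    exact Relation.TransGen.single hR
  | succ m ih =>
    rintro w v ⟨u, hR, hu⟩
    exact Relation.TransGen.head hR (ih hu)

lemma iterR_snoc : ∀ {n : ℕ} {w v v' : M.W}, M.iterR n w v → M.R v v' → M.iterR (n + 1) w v' := by
  intro n
  induction n with
  | zero =>
    intro w v v' h hR
    cases h
    exact ⟨v', hR, rfl⟩
  | succ m ih =>
    rintro w v v' ⟨u, h1, h2⟩ hR
    exact ⟨u, h1, ih h2 hR⟩

lemma transGen_iterR : ∀ {w v : M.W}, Relation.TransGen M.R w v → ∃ n, M.iterR (n + 1) w v := by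
  intro w v h
  induction h with
  | single hR => exact ⟨0, _, hR, rfl⟩
  | tail _ hR ih =>
    obtain ⟨n, hn⟩ := ih
    exact ⟨n + 1, iterR_snoc hn hR⟩

lemma not_sat_mbox {w : M.W} {φ : Fml} (h : ¬ M.sat w (Fml.mbox φ)) :
    ∃ n, ∃ v, M.iterR (n + 1) w v ∧ ¬ M.sat v φ := by
  rw [KM.sat] at h
  push_neg at h
  obtain ⟨v, hv, hφ⟩ := h
  obtain ⟨n, hn⟩ := transGen_iterR hv
  exact ⟨n, v, hn, hφ⟩

/-- minimal depth of a refutation of `φ` strictly below `w` (junk `0` if none). -/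
noncomputable def dd (M : KM) (φ : Fml) (w : M.W) : ℕ :=
  if h : ∃ n, ∃ v, M.iterR (n + 1) w v ∧ ¬ M.sat v φ then Nat.find h else 0

end KM

/-- context transfer to a successor world. -/
lemma ctx_true {M : KM} {w v : M.W} (hR : M.R w v) (Sg Γ P : Msf)
    (hL : ∀ χ ∈ Sg + Γ.map Fml.box + P.map Fml.mbox, M.sat w χ) :
    ∀ χ ∈ Γ + dne P, M.sat v χ := by
  intro χ hχ
  rw [dne] at hχ
  rcases Multiset.mem_add.1 hχ with hχ | hχ'
  · have : M.sat w (Fml.box χ) := hL _ (by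
      rw [Multiset.mem_add, Multiset.mem_add]
      exact Or.inl (Or.inr (Multiset.mem_map_of_mem _ hχ)))
    exact this v hR
  rcases Multiset.mem_add.1 hχ' with hχ | hχ
  · have : M.sat w (Fml.mbox χ) := hL _ (by
      rw [Multiset.mem_add]
      exact Or.inr (Multiset.mem_map_of_mem _ hχ))
    exact this v (Relation.TransGen.single hR)
  · obtain ⟨ψ, hψ, rfl⟩ := Multiset.mem_map.1 hχ
    have : M.sat w (Fml.mbox ψ) := hL _ (by
      rw [Multiset.mem_add]
      exact Or.inr (Multiset.mem_map_of_mem _ hψ))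
    intro u hu
    exact this u (Relation.TransGen.head hR hu)

def focusOf : Tag → Option Fml
  | .mboxF _ _ _ _ φ => some φ
  | _ => none

/-- From a refuted conclusion, some premise is refuted, with control of the world. -/
lemma step_choice (M : KM) (t : Tag) (hside : t.sideOk) (w : M.W)
    (hbad : M.refutes w t.concl) :
    ∃ i, i < t.arity ∧ ∃ v, M.refutes v (t.prem i) ∧
      (t.witness i = false → t.progress i = false → v = w) ∧
      (t.progress i = true → ∃ φ, focusOf t = some φ ∧ ¬ M.sat w (Fml.mbox φ) ∧
        ¬ M.sat v (Fml.mbox φ) ∧ M.dd φ v < M.dd φ w) := by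
  obtain ⟨hL, hR⟩ := hbad
  cases t with
  | ax Γ p Δ s =>
    exact absurd (hL (Fml.var p) (Multiset.mem_cons_self _ _))
      (hR (Fml.var p) (Multiset.mem_cons_self _ _))
  | axBot Γ Δ s =>
    exact absurd (hL Fml.bot (Multiset.mem_cons_self _ _)) (by rw [KM.sat]; exact id)
  | impL Γ φ ψ Δ s =>
    have himp : M.sat w (Fml.imp φ ψ) := hL _ (Multiset.mem_cons_self _ _)
    by_cases hφ : M.sat w φ
    · refine ⟨1, by simp [Tag.arity], w, ⟨?_, ?_⟩, fun _ _ => rfl, by simp [Tag.progress]⟩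
      · intro χ hχ
        rcases Multiset.mem_cons.1 hχ with rfl | hχ
        · exact himp hφ
        · exact hL χ (Multiset.mem_cons_of_mem hχ)
      · exact fun χ hχ => hR χ hχ
    · refine ⟨0, by simp [Tag.arity], w, ⟨?_, ?_⟩, fun _ _ => rfl, by simp [Tag.progress]⟩
      · exact fun χ hχ => hL χ (Multiset.mem_cons_of_mem hχ)
      · intro χ hχ
        rcases Multiset.mem_cons.1 hχ with rfl | hχ
        · exact hφ
        · exact hR χ hχ
  | impR Γ φ ψ Δ s =>
    have himp : ¬ M.sat w (Fml.imp φ ψ) := hR _ (Multiset.mem_cons_self _ _)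
    rw [KM.sat] at himp
    push_neg at himp
    refine ⟨0, by simp [Tag.arity], w, ⟨?_, ?_⟩, fun _ _ => rfl, by simp [Tag.progress]⟩
    · intro χ hχ
      rcases Multiset.mem_cons.1 hχ with rfl | hχ
      · exact himp.1
      · exact hL χ hχ
    · intro χ hχ
      rcases Multiset.mem_cons.1 hχ with rfl | hχ
      · exact himp.2
      · exact hR χ (Multiset.mem_cons_of_mem hχ)
  | box Sg Γ P Δ φ s =>
    have hbox : ¬ M.sat w (Fml.box φ) := hR _ (Multiset.mem_cons_self _ _)
    rw [KM.sat] at hbox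
    push_neg at hbox
    obtain ⟨v, hRv, hφ⟩ := hbox
    refine ⟨0, by simp [Tag.arity], v, ⟨ctx_true hRv Sg Γ P hL, ?_⟩,
      by simp [Tag.witness], by simp [Tag.progress]⟩
    intro χ hχ
    rw [Multiset.mem_singleton.1 hχ]
    exact hφ
  | mboxF Sg Γ P Δ φ =>
    have hmb : ¬ M.sat w (Fml.mbox φ) := hR _ (Multiset.mem_cons_self _ _)
    have hex := KM.not_sat_mbox hmb
    have hdd : M.dd φ w = Nat.find hex := by rw [KM.dd, dif_pos hex]
    obtain ⟨v0, hit, hv0⟩ := Nat.find_spec hex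
    rcases hn : Nat.find hex with _ | m
    · -- depth 1: go to witness premise
      rw [hn] at hit
      obtain ⟨u, hRu, hu⟩ := hit
      rcases hu with rfl
      refine ⟨0, by simp [Tag.arity], u, ⟨ctx_true hRu Sg Γ P hL, ?_⟩,
        by simp [Tag.witness], by simp [Tag.progress]⟩
      intro χ hχ
      rw [Multiset.mem_singleton.1 hχ]
      exact hv0
    · -- deeper: go to the loop premise
      rw [hn] at hit
      obtain ⟨u, hRu, hu⟩ := hit
      have humb : ¬ M.sat u (Fml.mbox φ) := by
        intro hsat
        exact hv0 (hsat v0 (KM.iterR_transGen hu))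
      refine ⟨1, by simp [Tag.arity], u, ⟨ctx_true hRu Sg Γ P hL, ?_⟩,
        by simp [Tag.witness, Tag.progress], ?_⟩
      · intro χ hχ
        rw [Multiset.mem_singleton.1 hχ]
        exact humb
      · intro _
        refine ⟨φ, rfl, hmb, humb, ?_⟩
        have hexu := KM.not_sat_mbox humb
        have hddu : M.dd φ u = Nat.find hexu := by rw [KM.dd, dif_pos hexu]
        have : Nat.find hexu ≤ m := Nat.find_le ⟨v0, hu, hv0⟩
        omega
  | mboxU Sg Γ P Δ φ s =>
    have hmb : ¬ M.sat w (Fml.mbox φ) := hR _ (Multiset.mem_cons_self _ _)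
    have hex := KM.not_sat_mbox hmb
    obtain ⟨n, v0, hit, hv0⟩ := hex
    cases n with
    | zero =>
      obtain ⟨u, hRu, hu⟩ := hit
      rcases hu with rfl
      refine ⟨0, by simp [Tag.arity], u, ⟨ctx_true hRu Sg Γ P hL, ?_⟩,
        by simp [Tag.witness], by simp [Tag.progress]⟩
      intro χ hχ
      rw [Multiset.mem_singleton.1 hχ]
      exact hv0
    | succ m =>
      obtain ⟨u, hRu, hu⟩ := hit
      have humb : ¬ M.sat u (Fml.mbox φ) := by
        intro hsat
        exact hv0 (hsat v0 (KM.iterR_transGen hu))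
      refine ⟨1, by simp [Tag.arity], u, ⟨ctx_true hRu Sg Γ P hL, ?_⟩,
        by simp [Tag.witness], by simp [Tag.progress]⟩
      intro χ hχ
      rw [Multiset.mem_singleton.1 hχ]
      exact humb
  | cut Γ Δ χ s =>
    by_cases hχ : M.sat w χ
    · refine ⟨1, by simp [Tag.arity], w, ⟨?_, ?_⟩, fun _ _ => rfl, by simp [Tag.progress]⟩
      · intro ξ hξ
        rcases Multiset.mem_cons.1 hξ with rfl | hξ
        · exact hχ
        · exact hL ξ hξ
      · exact fun ξ hξ => hR ξ hξ
    · refine ⟨0, by simp [Tag.arity], w, ⟨?_, ?_⟩, fun _ _ => rfl, by simp [Tag.progress]⟩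
      · exact fun ξ hξ => hL ξ hξ
      · intro ξ hξ
        rcases Multiset.mem_cons.1 hξ with rfl | hξ
        · exact hχ
        · exact hR ξ hξ
/-! ### the infinite-branch soundness argument -/

def BadAt (π : PreProof) (M : KM) (a : List ℕ) (w : M.W) : Prop :=
  ∃ t, π.label a = some t ∧ M.refutes w t.concl

lemma stepEx {π : PreProof} {M : KM} (hwf : π.Wf) {a : List ℕ} {w : M.W}
    (h : BadAt π M a w) :
    ∃ (i : ℕ) (v : M.W), BadAt π M (a ++ [i]) v ∧
      ∀ t, π.label a = some t →
        (t.witness i = false → t.progress i = false → v = w) ∧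
        (t.progress i = true → ∃ φ, focusOf t = some φ ∧ ¬ M.sat w (Fml.mbox φ) ∧
          ¬ M.sat v (Fml.mbox φ) ∧ M.dd φ v < M.dd φ w) := by
  obtain ⟨t, ht, hbad⟩ := h
  obtain ⟨i, hi, v, hv, hw, hp⟩ := step_choice M t (hwf.side a t ht) w hbad
  have hdom : π.dom (a ++ [i]) := (hwf.arity a t ht i).2 hi
  obtain ⟨ti, hti⟩ : ∃ ti, π.label (a ++ [i]) = some ti := by
    rcases hh : π.label (a ++ [i]) with _ | ti
    · exact absurd hh hdom
    · exact ⟨ti, rfl⟩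
  have hco : ti.concl = t.prem i := hwf.coherent a t i ti ht hti
  refine ⟨i, v, ⟨ti, hti, by rw [hco]; exact hv⟩, ?_⟩
  intro t' ht'
  obtain rfl : t = t' := by rw [ht] at ht'; injection ht'
  exact ⟨hw, hp⟩

lemma ann_prem (t : Tag) (i : ℕ) (hi : i < t.arity) (hw : t.witness i = false) :
    (t.prem i).ann = t.concl.ann := by
  cases t with
  | ax => simp [Tag.arity] at hi
  | axBot => simp [Tag.arity] at hi
  | impL Γ φ ψ Δ s =>
    simp only [Tag.arity] at hi
    rcases i with _ | _ | i
    · rfl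
    · rfl
    · omega
  | impR Γ φ ψ Δ s =>
    simp only [Tag.arity] at hi
    rcases i with _ | _ | i
    · rfl
    · omega
    · omega
  | box Sg Γ P Δ φ s =>
    simp only [Tag.arity] at hi
    rcases i with _ | i
    · simp [Tag.witness] at hw
    · omega
  | mboxF Sg Γ P Δ φ =>
    simp only [Tag.arity] at hi
    rcases i with _ | _ | i
    · simp [Tag.witness] at hw
    · rfl
    · omega
  | mboxU Sg Γ P Δ φ s =>
    simp only [Tag.arity] at hi
    rcases i with _ | _ | i
    · simp [Tag.witness] at hw
    · simp [Tag.witness] at hw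
    · omega
  | cut Γ Δ χ s =>
    simp only [Tag.arity] at hi
    rcases i with _ | _ | i
    · rfl
    · rfl
    · omega

lemma focusOf_ann {t : Tag} {φ : Fml} (h : focusOf t = some φ) :
    t.concl.ann = Ann.fml φ := by
  cases t <;> simp [focusOf] at h
  subst h
  rfl

lemma bp_snoc (f : ℕ → ℕ) (n : ℕ) :
    PreProof.branchPrefix f (n + 1) = PreProof.branchPrefix f n ++ [f n] := by
  show (List.range (n+1)).map f = _
  rw [List.range_succ]
  simp [PreProof.branchPrefix]

theorem soundness (π : PreProof) (hp : π.IsProof) {S : Sequent} (hc : π.Concl S) :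
    SValid S := by
  rintro M w0 href
  obtain ⟨hwf, hpc, α, ord, hα0, hord⟩ := hp
  obtain ⟨t0, ht0, hc0⟩ := hc
  have h0 : BadAt π M [] w0 := ⟨t0, ht0, by rw [hc0]; exact href⟩
  -- the chain of refuted nodes
  let ch : ℕ → {p : List ℕ × M.W // BadAt π M p.1 p.2} := fun n =>
    Nat.rec ⟨([], w0), h0⟩ (fun _ p =>
      ⟨(p.1.1 ++ [(stepEx hwf p.2).choose], (stepEx hwf p.2).choose_spec.choose),
        (stepEx hwf p.2).choose_spec.choose_spec.1⟩) n
  let f : ℕ → ℕ := fun n => (stepEx hwf (ch n).2).choose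
  let wr : ℕ → M.W := fun n => (ch n).1.2
  have hch : ∀ n, (ch (n+1)).1 = ((ch n).1.1 ++ [f n], (stepEx hwf (ch n).2).choose_spec.choose) := fun n => rfl
  have haddr : ∀ n, (ch n).1.1 = PreProof.branchPrefix f n := by
    intro n
    induction n with
    | zero => rfl
    | succ m ih => rw [bp_snoc, ← ih]
  have hbad : ∀ n, BadAt π M (PreProof.branchPrefix f n) (wr n) := by
    intro n
    have := (ch n).2
    rwa [haddr n] at this
  have hbranch : π.IsBranch f := by
    intro n
    obtain ⟨t, ht, -⟩ := hbad n
    rw [PreProof.dom, ht]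
    simp
  -- the tag at each node
  have htag : ∀ n, ∃ t, π.label (PreProof.branchPrefix f n) = some t := by
    intro n
    obtain ⟨t, ht, -⟩ := hbad n
    exact ⟨t, ht⟩
  let tg : ℕ → Tag := fun n => (htag n).choose
  have htg : ∀ n, π.label (PreProof.branchPrefix f n) = some (tg n) := fun n => (htag n).choose_spec
  -- edge conditions
  have hcond : ∀ n,
      ((tg n).witness (f n) = false → (tg n).progress (f n) = false → wr (n+1) = wr n) ∧
      ((tg n).progress (f n) = true → ∃ φ, focusOf (tg n) = some φ ∧
        ¬ M.sat (wr n) (Fml.mbox φ) ∧ ¬ M.sat (wr (n+1)) (Fml.mbox φ) ∧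
        M.dd φ (wr (n+1)) < M.dd φ (wr n)) := by
    intro n
    have hs := (stepEx hwf (ch n).2).choose_spec.choose_spec.2
    have := hs (tg n) (by rw [haddr n]; exact htg n)
    have hwr : wr (n+1) = (stepEx hwf (ch n).2).choose_spec.choose := rfl
    rw [← hwr] at this
    exact this
  -- arity of the step
  have harity : ∀ n, f n < (tg n).arity := by
    intro n
    have hd : π.dom (PreProof.branchPrefix f (n+1)) := hbranch (n+1)
    rw [bp_snoc] at hd
    exact (hwf.arity _ (tg n) (htg n) (f n)).1 hd
  -- ordinal facts
  have hOrd : ∀ n, ((tg n).witness (f n) = true →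
        ord (PreProof.branchPrefix f (n+1)) < ord (PreProof.branchPrefix f n)) ∧
      ((tg n).witness (f n) = false →
        ord (PreProof.branchPrefix f (n+1)) = ord (PreProof.branchPrefix f n)) := by
    intro n
    have hd : π.dom (PreProof.branchPrefix f n ++ [f n]) := by
      rw [← bp_snoc]; exact hbranch (n+1)
    have := hord (PreProof.branchPrefix f n) (tg n) (f n) (htg n) hd
    rw [← bp_snoc] at this
    exact this
  let A : ℕ → Ordinal.{0} := fun n => ord (PreProof.branchPrefix f n)
  have hAle : ∀ n, A (n+1) ≤ A n := by
    intro n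
    rcases hw : (tg n).witness (f n) with _ | _
    · exact le_of_eq ((hOrd n).2 hw)
    · exact le_of_lt ((hOrd n).1 hw)
  have hAmono : ∀ m n, m ≤ n → A n ≤ A m := by
    intro m n h
    induction n with
    | zero => cases Nat.le_zero.1 h; exact le_rfl
    | succ k ih =>
      rcases Nat.lt_or_ge m (k+1) with h' | h'
      · exact le_trans (hAle k) (ih (Nat.lt_succ_iff.1 h'))
      · have : m = k + 1 := le_antisymm h h'
        subst this
        exact le_rfl
  -- minimal value of A is attained
  obtain ⟨x, ⟨N, rfl⟩, hmin⟩ := Ordinal.lt_wf.has_min (Set.range A) ⟨A 0, 0, rfl⟩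
  have hAconst : ∀ n, N ≤ n → A n = A N := by
    intro n hn
    have h1 : A n ≤ A N := hAmono N n hn
    rcases lt_or_eq_of_le h1 with h2 | h2
    · exact absurd h2 (hmin (A n) ⟨n, rfl⟩)
    · exact h2
  have hnowit : ∀ n, N ≤ n → (tg n).witness (f n) = false := by
    intro n hn
    rcases hw : (tg n).witness (f n) with _ | _
    · rfl
    · have h1 : A (n+1) < A n := (hOrd n).1 hw
      rw [hAconst n hn] at h1
      exact absurd h1 (hmin (A (n+1)) ⟨n+1, rfl⟩)
  -- annotation constancy from N on
  have hannstep : ∀ n, N ≤ n → (tg (n+1)).concl.ann = (tg n).concl.ann := by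
    intro n hn
    have hco : (tg (n+1)).concl = (tg n).prem (f n) := by
      have := hwf.coherent (PreProof.branchPrefix f n) (tg n) (f n) (tg (n+1)) (htg n)
        (by rw [← bp_snoc]; exact htg (n+1))
      exact this
    rw [hco]
    exact ann_prem (tg n) (f n) (harity n) (hnowit n hn)
  have hann : ∀ n, N ≤ n → (tg n).concl.ann = (tg N).concl.ann := by
    intro n
    induction n with
    | zero => intro h; cases Nat.le_zero.1 h; rfl
    | succ k ih =>
      intro h
      rcases Nat.lt_or_ge N (k+1) with h' | h'
      · rw [hannstep k (Nat.lt_succ_iff.1 h')]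
        exact ih (Nat.lt_succ_iff.1 h')
      · have : N = k + 1 := le_antisymm h h'
        rw [this]
  -- events are progress events, all with the same focus
  have hev : ∀ m, N ≤ m → ∃ n, m ≤ n ∧ (tg n).progress (f n) = true := by
    intro m hm
    obtain ⟨n, hn, t, ht, hor⟩ := hpc f hbranch m
    obtain rfl : t = tg n := by
      rw [htg n] at ht
      injection ht with hh
      exact hh.symm
    rcases hor with h | h
    · exact ⟨n, hn, h⟩
    · exact absurd h (by rw [hnowit n (le_trans hm hn)]; simp)
  -- there is at least one event; its focus fixes the annotation
  obtain ⟨n0, hn0, hp0⟩ := hev N le_rfl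
  obtain ⟨φ0, hφ0, -, -, -⟩ := (hcond n0).2 hp0
  have hannN : (tg N).concl.ann = Ann.fml φ0 := by
    rw [← hann n0 hn0]
    exact focusOf_ann hφ0
  -- every event from N on has focus φ0
  have hfocus : ∀ n, N ≤ n → (tg n).progress (f n) = true →
      ∃ h : focusOf (tg n) = some φ0, True := by
    intro n hn hp
    obtain ⟨φ, hφ, -, -, -⟩ := (hcond n).2 hp
    have h1 : Ann.fml φ = Ann.fml φ0 := by
      rw [← focusOf_ann hφ, hann n hn, hannN]
    obtain rfl : φ = φ0 := by injection h1
    exact ⟨hφ, trivial⟩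
  -- the measure
  let D : ℕ → ℕ := fun n => M.dd φ0 (wr n)
  have hDstep : ∀ n, N ≤ n → ((tg n).progress (f n) = true → D (n+1) < D n) ∧
      ((tg n).progress (f n) = false → D (n+1) = D n) := by
    intro n hn
    constructor
    · intro hp
      obtain ⟨hφ, -⟩ := hfocus n hn hp
      obtain ⟨φ, hφ', -, -, hlt⟩ := (hcond n).2 hp
      rw [hφ] at hφ'
      obtain rfl : φ0 = φ := by injection hφ'
      exact hlt
    · intro hp
      have := (hcond n).1 (hnowit n hn) hp
      show M.dd φ0 (wr (n+1)) = M.dd φ0 (wr n)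
      rw [this]
  have hDmono : ∀ m n, N ≤ m → m ≤ n → D n ≤ D m := by
    intro m n hN h
    induction n with
    | zero => cases Nat.le_zero.1 h; exact le_rfl
    | succ k ih =>
      rcases Nat.lt_or_ge m (k+1) with h' | h'
      · have hk : m ≤ k := Nat.lt_succ_iff.1 h'
        have hNk : N ≤ k := le_trans hN hk
        rcases hpk : (tg k).progress (f k) with _ | _
        · rw [(hDstep k hNk).2 hpk]; exact ih hk
        · exact le_trans (le_of_lt ((hDstep k hNk).1 hpk)) (ih hk)
      · have : m = k + 1 := le_antisymm h h'
        subst this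
        exact le_rfl
  -- infinite strict descent : contradiction
  have hdesc : ∀ k, ∃ n, N ≤ n ∧ D n + k ≤ D N := by
    intro k
    induction k with
    | zero => exact ⟨N, le_rfl, by omega⟩
    | succ j ih =>
      obtain ⟨n, hNn, hDn⟩ := ih
      obtain ⟨n', hn', hp'⟩ := hev n hNn
      have h1 : D (n' + 1) < D n' := (hDstep n' (le_trans hNn hn')).1 hp'
      have h2 : D n' ≤ D n := hDmono n n' hNn hn'
      exact ⟨n' + 1, by omega, by omega⟩
  obtain ⟨n, -, hDn⟩ := hdesc (D N + 1)
  omega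
/-! ## Completeness of the cut-free system -/

/-- the canonical witness context of a left multiset. -/
def ctx (X : Msf) : Msf := boxes X + dne (mboxes X)

def wit1 (X : Msf) (φ : Fml) : Sequent := ⟨ctx X, Ann.o, {φ}⟩
def wit2 (X : Msf) (φ : Fml) : Sequent := ⟨ctx X, Ann.fml φ, {Fml.mbox φ}⟩

lemma wit1_ok (X : Msf) (φ : Fml) : (wit1 X φ).ok := by
  intro ψ h
  exact absurd h (by rw [wit1]; simp)

lemma wit2_ok (X : Msf) (φ : Fml) : (wit2 X φ).ok := by
  intro ψ h
  obtain rfl : φ = ψ := by injection h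
  rw [wit2]
  simp

/-! smart constructors for `LD` -/

namespace LD

variable {V : Set Sequent}

noncomputable def var' {S : Sequent} {p : ℕ} (hok : S.ok) (h1 : Fml.var p ∈ S.left)
    (h2 : Fml.var p ∈ S.right) : LD V S := by
  have e : (Tag.ax (S.left.erase (Fml.var p)) p (S.right.erase (Fml.var p)) S.ann).concl = S := by
    show (⟨Fml.var p ::ₘ _, _, Fml.var p ::ₘ _⟩ : Sequent) = S
    rw [Multiset.cons_erase h1, Multiset.cons_erase h2]
  exact e ▸ LD.ax _ p _ S.ann (e.symm ▸ hok)

noncomputable def bot' {S : Sequent} (hok : S.ok) (h1 : Fml.bot ∈ S.left) : LD V S := by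
  have e : (Tag.axBot (S.left.erase Fml.bot) S.right S.ann).concl = S := by
    show (⟨Fml.bot ::ₘ _, _, _⟩ : Sequent) = S
    rw [Multiset.cons_erase h1]
  exact e ▸ LD.axBot _ _ S.ann (e.symm ▸ hok)

noncomputable def impL' {S : Sequent} {φ ψ : Fml} (hok : S.ok) (h : Fml.imp φ ψ ∈ S.left)
    (k0 : LD V ⟨S.left.erase (Fml.imp φ ψ), S.ann, φ ::ₘ S.right⟩)
    (k1 : LD V ⟨ψ ::ₘ S.left.erase (Fml.imp φ ψ), S.ann, S.right⟩) : LD V S := by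
  have e : (Tag.impL (S.left.erase (Fml.imp φ ψ)) φ ψ S.right S.ann).concl = S := by
    show (⟨Fml.imp φ ψ ::ₘ _, _, _⟩ : Sequent) = S
    rw [Multiset.cons_erase h]
  exact e ▸ LD.impL _ φ ψ _ S.ann (e.symm ▸ hok) k0 k1

noncomputable def impR' {S : Sequent} {φ ψ : Fml} (hok : S.ok) (h : Fml.imp φ ψ ∈ S.right)
    (k : LD V ⟨φ ::ₘ S.left, S.ann, ψ ::ₘ S.right.erase (Fml.imp φ ψ)⟩) : LD V S := by
  have e : (Tag.impR S.left φ ψ (S.right.erase (Fml.imp φ ψ)) S.ann).concl = S := by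
    show (⟨_, _, Fml.imp φ ψ ::ₘ _⟩ : Sequent) = S
    rw [Multiset.cons_erase h]
  exact e ▸ LD.impR _ φ ψ _ S.ann (e.symm ▸ hok) k

noncomputable def box' {S : Sequent} {φ : Fml} (hok : S.ok) (h : Fml.box φ ∈ S.right)
    (w : Prov (wit1 S.left φ)) : LD V S := by
  have e : (Tag.box (sg S.left) (boxes S.left) (mboxes S.left)
      (S.right.erase (Fml.box φ)) φ S.ann).concl = S := by
    show (⟨sg S.left + (boxes S.left).map Fml.box + (mboxes S.left).map Fml.mbox, _,
      Fml.box φ ::ₘ _⟩ : Sequent) = S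
    rw [← decomp, Multiset.cons_erase h]
  exact e ▸ LD.box _ _ _ _ φ S.ann (e.symm ▸ hok) w

noncomputable def mboxF' {S : Sequent} {φ : Fml} (hok : S.ok) (h : Fml.mbox φ ∈ S.right)
    (hann : S.ann = Ann.fml φ) (w : Prov (wit1 S.left φ))
    (k : PSum (Prov (wit2 S.left φ)) (wit2 S.left φ ∈ V)) : LD V S := by
  have e : (Tag.mboxF (sg S.left) (boxes S.left) (mboxes S.left)
      (S.right.erase (Fml.mbox φ)) φ).concl = S := by
    show (⟨sg S.left + (boxes S.left).map Fml.box + (mboxes S.left).map Fml.mbox, Ann.fml φ,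
      Fml.mbox φ ::ₘ _⟩ : Sequent) = S
    rw [← decomp, Multiset.cons_erase h, ← hann]
  exact e ▸ LD.mboxF _ _ _ _ φ (e.symm ▸ hok) w k

noncomputable def mboxU' {S : Sequent} {φ : Fml} (hok : S.ok) (h : Fml.mbox φ ∈ S.right)
    (hann : S.ann ≠ Ann.fml φ) (w1 : Prov (wit1 S.left φ)) (w2 : Prov (wit2 S.left φ)) :
    LD V S := by
  have e : (Tag.mboxU (sg S.left) (boxes S.left) (mboxes S.left)
      (S.right.erase (Fml.mbox φ)) φ S.ann).concl = S := by
    show (⟨sg S.left + (boxes S.left).map Fml.box + (mboxes S.left).map Fml.mbox, S.ann,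
      Fml.mbox φ ::ₘ _⟩ : Sequent) = S
    rw [← decomp, Multiset.cons_erase h]
  exact e ▸ LD.mboxU _ _ _ _ φ S.ann (e.symm ▸ hok) hann w1 w2

end LD

theorem mainClosure' (V : Set Sequent) (hF : ∀ T, T ∈ V → Nonempty (LD V T)) {S : Sequent}
    (hS : Nonempty (LD V S)) : Prov S :=
  mainClosure V (fun T h => Classical.choice (hF T h)) (Classical.choice hS)

theorem prov_ld {S : Sequent} (hS : Nonempty (LD ∅ S)) : Prov S :=
  mainClosure' ∅ (fun _ h => absurd h (Set.notMem_empty _)) hS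

/-! Prov closure lemmas -/

lemma prov_var {S : Sequent} {p : ℕ} (hok : S.ok) (h1 : Fml.var p ∈ S.left)
    (h2 : Fml.var p ∈ S.right) : Prov S := prov_ld ⟨LD.var' hok h1 h2⟩

lemma prov_bot {S : Sequent} (hok : S.ok) (h1 : Fml.bot ∈ S.left) : Prov S :=
  prov_ld ⟨LD.bot' hok h1⟩

lemma prov_impL {S : Sequent} {φ ψ : Fml} (hok : S.ok) (h : Fml.imp φ ψ ∈ S.left)
    (k0 : Prov ⟨S.left.erase (Fml.imp φ ψ), S.ann, φ ::ₘ S.right⟩)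
    (k1 : Prov ⟨ψ ::ₘ S.left.erase (Fml.imp φ ψ), S.ann, S.right⟩) : Prov S :=
  prov_ld ⟨LD.impL' hok h (LD.hyp _ k0) (LD.hyp _ k1)⟩

lemma prov_impR {S : Sequent} {φ ψ : Fml} (hok : S.ok) (h : Fml.imp φ ψ ∈ S.right)
    (k : Prov ⟨φ ::ₘ S.left, S.ann, ψ ::ₘ S.right.erase (Fml.imp φ ψ)⟩) : Prov S :=
  prov_ld ⟨LD.impR' hok h (LD.hyp _ k)⟩

lemma prov_box {S : Sequent} {φ : Fml} (hok : S.ok) (h : Fml.box φ ∈ S.right)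
    (w : Prov (wit1 S.left φ)) : Prov S := prov_ld ⟨LD.box' hok h w⟩

lemma prov_mbox {S : Sequent} {φ : Fml} (hok : S.ok) (h : Fml.mbox φ ∈ S.right)
    (w1 : Prov (wit1 S.left φ)) (w2 : Prov (wit2 S.left φ)) : Prov S := by
  by_cases hann : S.ann = Ann.fml φ
  · exact prov_ld ⟨LD.mboxF' hok h hann w1 (PSum.inl w2)⟩
  · exact prov_ld ⟨LD.mboxU' hok h hann w1 w2⟩

/-! ## Saturation -/

def cnt : Fml → ℕ
  | .imp a b => cnt a + cnt b + 1
  | .box a => cnt a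
  | .mbox a => cnt a
  | _ => 0

def mcnt (X : Msf) : ℕ := (X.map cnt).sum

lemma mcnt_cons (a : Fml) (X : Msf) : mcnt (a ::ₘ X) = cnt a + mcnt X := by
  rw [mcnt, Multiset.map_cons, Multiset.sum_cons]; rfl

lemma mcnt_erase {a : Fml} {X : Msf} (h : a ∈ X) : mcnt X = cnt a + mcnt (X.erase a) := by
  conv_lhs => rw [← Multiset.cons_erase h]
  rw [mcnt_cons]

def scnt (S : Sequent) : ℕ := mcnt S.left + mcnt S.right

def Saturated (S : Sequent) : Prop :=
  (∀ a b : Fml, Fml.imp a b ∉ S.left) ∧ (∀ a b : Fml, Fml.imp a b ∉ S.right)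

inductive PStep : Sequent → Sequent → Prop
  | L0 (Γ : Msf) (φ ψ : Fml) (Δ : Msf) (s : Ann) :
      PStep ⟨Fml.imp φ ψ ::ₘ Γ, s, Δ⟩ ⟨Γ, s, φ ::ₘ Δ⟩
  | L1 (Γ : Msf) (φ ψ : Fml) (Δ : Msf) (s : Ann) :
      PStep ⟨Fml.imp φ ψ ::ₘ Γ, s, Δ⟩ ⟨ψ ::ₘ Γ, s, Δ⟩
  | R (Γ : Msf) (φ ψ : Fml) (Δ : Msf) (s : Ann) :
      PStep ⟨Γ, s, Fml.imp φ ψ ::ₘ Δ⟩ ⟨φ ::ₘ Γ, s, ψ ::ₘ Δ⟩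

lemma PStep_ok {S S' : Sequent} (h : PStep S S') (hok : S.ok) : S'.ok := by
  cases h with
  | L0 Γ φ ψ Δ s =>
    intro ξ hξ
    exact Multiset.mem_cons_of_mem (hok ξ hξ)
  | L1 Γ φ ψ Δ s =>
    intro ξ hξ
    exact hok ξ hξ
  | R Γ φ ψ Δ s =>
    intro ξ hξ
    have hh := hok ξ hξ
    rcases Multiset.mem_cons.1 hh with hh | hh
    · exact absurd hh (by simp)
    · exact Multiset.mem_cons_of_mem hh

lemma PStep_scnt {S S' : Sequent} (h : PStep S S') : scnt S' < scnt S := by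
  cases h with
  | L0 Γ φ ψ Δ s =>
    show mcnt Γ + mcnt (φ ::ₘ Δ) < mcnt (Fml.imp φ ψ ::ₘ Γ) + mcnt Δ
    rw [mcnt_cons, mcnt_cons, cnt]
    omega
  | L1 Γ φ ψ Δ s =>
    show mcnt (ψ ::ₘ Γ) + mcnt Δ < mcnt (Fml.imp φ ψ ::ₘ Γ) + mcnt Δ
    rw [mcnt_cons, mcnt_cons, cnt]
    omega
  | R Γ φ ψ Δ s =>
    show mcnt (φ ::ₘ Γ) + mcnt (ψ ::ₘ Δ) < mcnt Γ + mcnt (Fml.imp φ ψ ::ₘ Δ)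
    rw [mcnt_cons, mcnt_cons, mcnt_cons, cnt]
    omega

/-- descent to a saturated unprovable sequent. -/
lemma descend : ∀ (k : ℕ) (S : Sequent), scnt S ≤ k → ¬ Prov S → S.ok →
    ∃ L, Relation.ReflTransGen PStep S L ∧ Saturated L ∧ ¬ Prov L ∧ L.ok := by
  intro k
  induction k with
  | zero =>
    intro S hk hnp hok
    by_cases hsat : Saturated S
    · exact ⟨S, Relation.ReflTransGen.refl, hsat, hnp, hok⟩
    · exfalso
      rw [Saturated, not_and_or] at hsat
      push_neg at hsat
      rcases hsat with ⟨a, b, hab⟩ | ⟨a, b, hab⟩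
      · have := mcnt_erase hab
        have : 1 ≤ scnt S := by rw [scnt, this, cnt]; omega
        omega
      · have := mcnt_erase hab
        have : 1 ≤ scnt S := by rw [scnt, this, cnt]; omega
        omega
  | succ m ih =>
    intro S hk hnp hok
    by_cases hsat : Saturated S
    · exact ⟨S, Relation.ReflTransGen.refl, hsat, hnp, hok⟩
    · rw [Saturated, not_and_or] at hsat
      push_neg at hsat
      rcases hsat with ⟨a, b, hab⟩ | ⟨a, b, hab⟩
      · -- imp on the left
        set S0 : Sequent := ⟨S.left.erase (Fml.imp a b), S.ann, a ::ₘ S.right⟩ with hS0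
        set S1 : Sequent := ⟨b ::ₘ S.left.erase (Fml.imp a b), S.ann, S.right⟩ with hS1
        have hst0 : PStep S S0 := by
          have := PStep.L0 (S.left.erase (Fml.imp a b)) a b S.right S.ann
          rwa [Multiset.cons_erase hab] at this
        have hst1 : PStep S S1 := by
          have := PStep.L1 (S.left.erase (Fml.imp a b)) a b S.right S.ann
          rwa [Multiset.cons_erase hab] at this
        have hnp' : ¬ Prov S0 ∨ ¬ Prov S1 := by
          by_contra hh
          push_neg at hh
          exact hnp (prov_impL hok hab hh.1 hh.2)
        rcases hnp' with hh | hh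
        · obtain ⟨L, hc, h1, h2, h3⟩ := ih S0
            (by have := PStep_scnt hst0; omega) hh (PStep_ok hst0 hok)
          exact ⟨L, Relation.ReflTransGen.head hst0 hc, h1, h2, h3⟩
        · obtain ⟨L, hc, h1, h2, h3⟩ := ih S1
            (by have := PStep_scnt hst1; omega) hh (PStep_ok hst1 hok)
          exact ⟨L, Relation.ReflTransGen.head hst1 hc, h1, h2, h3⟩
      · -- imp on the right
        set S0 : Sequent := ⟨a ::ₘ S.left, S.ann, b ::ₘ S.right.erase (Fml.imp a b)⟩ with hS0
        have hst0 : PStep S S0 := by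
          have := PStep.R S.left a b (S.right.erase (Fml.imp a b)) S.ann
          rwa [Multiset.cons_erase hab] at this
        have hnp' : ¬ Prov S0 := fun hh => hnp (prov_impR hok hab hh)
        obtain ⟨L, hc, h1, h2, h3⟩ := ih S0
          (by have := PStep_scnt hst0; omega) hnp' (PStep_ok hst0 hok)
        exact ⟨L, Relation.ReflTransGen.head hst0 hc, h1, h2, h3⟩
/-! ## The canonical model -/

def wits (U : Sequent) : Set Sequent :=
  {T | ∃ φ : Fml, (Fml.box φ ∈ U.right ∧ T = wit1 U.left φ) ∨
        (Fml.mbox φ ∈ U.right ∧ (T = wit1 U.left φ ∨ T = wit2 U.left φ))}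

lemma wits_left {U T : Sequent} (h : T ∈ wits U) : T.left = ctx U.left := by
  obtain ⟨φ, h⟩ := h
  rcases h with ⟨-, rfl⟩ | ⟨-, rfl | rfl⟩ <;> rfl

def Wld : Type := {U : Sequent // Saturated U ∧ U.ok ∧ ¬ Prov U}

noncomputable def KMc : KM where
  W := Wld
  R := fun U U' => ∃ T ∈ wits U.1, Relation.ReflTransGen PStep T U'.1
  V := fun p U => Fml.var p ∈ U.1.left

/-! membership preservation along propositional steps -/

lemma PStep_left_mem {S S' : Sequent} (h : PStep S S') {χ : Fml}
    (hni : ∀ a b : Fml, χ ≠ Fml.imp a b) (hχ : χ ∈ S.left) : χ ∈ S'.left := by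
  cases h with
  | L0 Γ φ ψ Δ s =>
    rcases Multiset.mem_cons.1 hχ with hh | hh
    · exact absurd hh (hni φ ψ)
    · exact hh
  | L1 Γ φ ψ Δ s =>
    rcases Multiset.mem_cons.1 hχ with hh | hh
    · exact absurd hh (hni φ ψ)
    · exact Multiset.mem_cons_of_mem hh
  | R Γ φ ψ Δ s => exact Multiset.mem_cons_of_mem hχ

lemma PStep_right_mem {S S' : Sequent} (h : PStep S S') {χ : Fml}
    (hni : ∀ a b : Fml, χ ≠ Fml.imp a b) (hχ : χ ∈ S.right) : χ ∈ S'.right := by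
  cases h with
  | L0 Γ φ ψ Δ s => exact Multiset.mem_cons_of_mem hχ
  | L1 Γ φ ψ Δ s => exact hχ
  | R Γ φ ψ Δ s =>
    rcases Multiset.mem_cons.1 hχ with hh | hh
    · exact absurd hh (hni φ ψ)
    · exact Multiset.mem_cons_of_mem hh

lemma chain_left_mem {S L : Sequent} (h : Relation.ReflTransGen PStep S L) {χ : Fml}
    (hni : ∀ a b : Fml, χ ≠ Fml.imp a b) (hχ : χ ∈ S.left) : χ ∈ L.left := by
  induction h with
  | refl => exact hχ
  | tail _ hst ih => exact PStep_left_mem hst hni ih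

lemma chain_right_mem {S L : Sequent} (h : Relation.ReflTransGen PStep S L) {χ : Fml}
    (hni : ∀ a b : Fml, χ ≠ Fml.imp a b) (hχ : χ ∈ S.right) : χ ∈ L.right := by
  induction h with
  | refl => exact hχ
  | tail _ hst ih => exact PStep_right_mem hst hni ih

/-! context membership -/

lemma mem_ctx_of_box {X : Msf} {φ : Fml} (h : Fml.box φ ∈ X) : φ ∈ ctx X := by
  rw [ctx, Multiset.mem_add]
  exact Or.inl ((Multiset.mem_filterMap _ _).2 ⟨Fml.box φ, h, rfl⟩)

lemma mem_ctx_of_mbox {X : Msf} {φ : Fml} (h : Fml.mbox φ ∈ X) : φ ∈ ctx X := by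
  rw [ctx, Multiset.mem_add, dne, Multiset.mem_add]
  exact Or.inr (Or.inl ((Multiset.mem_filterMap _ _).2 ⟨Fml.mbox φ, h, rfl⟩))

lemma mem_ctx_mbox_of_mbox {X : Msf} {φ : Fml} (h : Fml.mbox φ ∈ X) : Fml.mbox φ ∈ ctx X := by
  rw [ctx, Multiset.mem_add, dne, Multiset.mem_add]
  exact Or.inr (Or.inr (Multiset.mem_map_of_mem _ ((Multiset.mem_filterMap _ _).2 ⟨Fml.mbox φ, h, rfl⟩)))

/-! the transfer lemma -/

lemma TR {m : ℕ} {W : Wld}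
    (hW : ∀ χ : Fml, χ.size ≤ m →
      (χ ∈ W.1.left → KMc.sat W χ) ∧ (χ ∈ W.1.right → ¬ KMc.sat W χ)) :
    ∀ T, Relation.ReflTransGen PStep T W.1 →
      ∀ χ : Fml, χ.size ≤ m → (χ ∈ T.left → KMc.sat W χ) ∧ (χ ∈ T.right → ¬ KMc.sat W χ) := by
  intro T hch
  induction hch using Relation.ReflTransGen.head_induction_on with
  | refl => exact hW
  | head hst hch ih =>
    intro χ hsz
    cases hst with
    | L0 Γ φ ψ Δ s =>
      constructor
      · intro hχ
        rcases Multiset.mem_cons.1 hχ with rfl | hχ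
        · have hszφ : φ.size ≤ m := by
            have : (Fml.imp φ ψ).size = φ.size + ψ.size + 1 := rfl
            omega
          have hφ : ¬ KMc.sat W φ := (ih φ hszφ).2 (Multiset.mem_cons_self _ _)
          exact fun hsφ => absurd hsφ hφ
        · exact (ih χ hsz).1 hχ
      · intro hχ
        exact (ih χ hsz).2 (Multiset.mem_cons_of_mem hχ)
    | L1 Γ φ ψ Δ s =>
      constructor
      · intro hχ
        rcases Multiset.mem_cons.1 hχ with rfl | hχ
        · have hszψ : ψ.size ≤ m := by
            have : (Fml.imp φ ψ).size = φ.size + ψ.size + 1 := rfl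
            omega
          have hψ : KMc.sat W ψ := (ih ψ hszψ).1 (Multiset.mem_cons_self _ _)
          exact fun _ => hψ
        · exact (ih χ hsz).1 (Multiset.mem_cons_of_mem hχ)
      · intro hχ
        exact (ih χ hsz).2 hχ
    | R Γ φ ψ Δ s =>
      constructor
      · intro hχ
        exact (ih χ hsz).1 (Multiset.mem_cons_of_mem hχ)
      · intro hχ
        rcases Multiset.mem_cons.1 hχ with rfl | hχ
        · have hszφψ : φ.size ≤ m ∧ ψ.size ≤ m := by
            have : (Fml.imp φ ψ).size = φ.size + ψ.size + 1 := rfl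
            omega
          have hφ : KMc.sat W φ := (ih φ hszφψ.1).1 (Multiset.mem_cons_self _ _)
          have hψ : ¬ KMc.sat W ψ := (ih ψ hszφψ.2).2 (Multiset.mem_cons_self _ _)
          exact fun hsat => hψ (hsat hφ)
        · exact (ih χ hsz).2 (Multiset.mem_cons_of_mem hχ)

/-! unblocked unfolding of a failed focused ⊞-sequent -/

inductive RE (a : Fml) : Sequent → Prop
  | found (X L : Sequent) : Relation.ReflTransGen PStep X L → Saturated L → ¬ Prov L → L.ok →
      ¬ Prov (wit1 L.left a) → RE a X
  | deeper (X L : Sequent) : Relation.ReflTransGen PStep X L → Saturated L → ¬ Prov L → L.ok →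
      ¬ Prov (wit2 L.left a) → RE a (wit2 L.left a) → RE a X

lemma RE_prepend {a : Fml} {X X' : Sequent} (hst : PStep X X') (h : RE a X') : RE a X := by
  cases h with
  | found _ L hch h1 h2 h3 h4 => exact RE.found X L (Relation.ReflTransGen.head hst hch) h1 h2 h3 h4
  | deeper _ L hch h1 h2 h3 h4 h5 =>
    exact RE.deeper X L (Relation.ReflTransGen.head hst hch) h1 h2 h3 h4 h5

lemma RE_refute {n : ℕ}
    (hTL : ∀ (v : Wld) (ξ : Fml), ξ.size ≤ n →
      (ξ ∈ v.1.left → KMc.sat v ξ) ∧ (ξ ∈ v.1.right → ¬ KMc.sat v ξ))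
    {a : Fml} (hsz : a.size ≤ n) :
    ∀ X, RE a X → Fml.mbox a ∈ X.right →
    ∀ W : Wld, X ∈ wits W.1 →
      ∃ v : Wld, Relation.TransGen KMc.R W v ∧ ¬ KMc.sat v a := by
  intro X hre
  induction hre with
  | found X L hch hst hnp hok hT1 =>
    intro hmem W hX
    let wL : Wld := ⟨L, hst, hok, hnp⟩
    have hR1 : KMc.R W wL := ⟨X, hX, hch⟩
    have hmL : Fml.mbox a ∈ L.right := chain_right_mem hch (by intro x y h; exact Fml.noConfusion h) hmem
    obtain ⟨L', hch', hs', hnp', hok'⟩ := descend (scnt (wit1 L.left a)) _ le_rfl hT1 (wit1_ok _ _)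
    let v : Wld := ⟨L', hs', hok', hnp'⟩
    have hR2 : KMc.R wL v := ⟨wit1 L.left a, ⟨a, Or.inr ⟨hmL, Or.inl rfl⟩⟩, hch'⟩
    have hv : ¬ KMc.sat v a :=
      (TR (hTL v) _ hch' a hsz).2 (by show a ∈ ({a} : Msf); simp)
    exact ⟨v, Relation.TransGen.head hR1 (Relation.TransGen.single hR2), hv⟩
  | deeper X L hch hst hnp hok hT2 hre ih =>
    intro hmem W hX
    let wL : Wld := ⟨L, hst, hok, hnp⟩
    have hR1 : KMc.R W wL := ⟨X, hX, hch⟩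
    have hmL : Fml.mbox a ∈ L.right := chain_right_mem hch (by intro x y h; exact Fml.noConfusion h) hmem
    obtain ⟨v, htr, hv⟩ := ih (by show Fml.mbox a ∈ ({Fml.mbox a} : Msf); simp) wL
      ⟨a, Or.inr ⟨hmL, Or.inr rfl⟩⟩
    exact ⟨v, Relation.TransGen.head hR1 htr, hv⟩

/-! the loop set for the contradiction branch -/

def VV (a : Fml) : Set Sequent :=
  {X | ¬ Prov X ∧ X.ok ∧ X.ann = Ann.fml a ∧ Fml.mbox a ∈ X.right ∧ ¬ RE a X}

lemma buildF (a : Fml) : ∀ (k : ℕ) (X : Sequent), scnt X ≤ k → X ∈ VV a →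
    Nonempty (LD (VV a) X) := by
  intro k
  induction k using Nat.strong_induction_on with
  | _ k IHk =>
  rintro X hk ⟨hnp, hok, hann, hmem, hnre⟩
  by_cases hsat : Saturated X
  · have hnf : Prov (wit1 X.left a) := by
      by_contra hh
      exact hnre (RE.found X X Relation.ReflTransGen.refl hsat hnp hok hh)
    by_cases h4 : Prov (wit2 X.left a)
    · exact ⟨LD.mboxF' hok hmem hann hnf (PSum.inl h4)⟩
    · have h2 : ¬ RE a (wit2 X.left a) := by
        intro h3
        exact hnre (RE.deeper X X Relation.ReflTransGen.refl hsat hnp hok h4 h3)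
      refine ⟨LD.mboxF' hok hmem hann hnf (PSum.inr ?_)⟩
      exact ⟨h4, wit2_ok _ _, rfl, by show Fml.mbox a ∈ ({Fml.mbox a} : Msf); simp, h2⟩
  · rw [Saturated, not_and_or] at hsat
    push_neg at hsat
    rcases hsat with ⟨φ, ψ, hin⟩ | ⟨φ, ψ, hin⟩
    · -- imp on the left
      set X0 : Sequent := ⟨X.left.erase (Fml.imp φ ψ), X.ann, φ ::ₘ X.right⟩ with hX0
      set X1 : Sequent := ⟨ψ ::ₘ X.left.erase (Fml.imp φ ψ), X.ann, X.right⟩ with hX1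
      have hst0 : PStep X X0 := by
        have := PStep.L0 (X.left.erase (Fml.imp φ ψ)) φ ψ X.right X.ann
        rwa [Multiset.cons_erase hin] at this
      have hst1 : PStep X X1 := by
        have := PStep.L1 (X.left.erase (Fml.imp φ ψ)) φ ψ X.right X.ann
        rwa [Multiset.cons_erase hin] at this
      have hch : ∀ (Y : Sequent), PStep X Y → Fml.mbox a ∈ Y.right →
          Nonempty (LD (VV a) Y) ∨ Prov Y := by
        intro Y hst hmY
        by_cases hpY : Prov Y
        · exact Or.inr hpY
        · refine Or.inl (IHk (scnt Y) ?_ Y le_rfl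
            ⟨hpY, PStep_ok hst hok, ?_, hmY, fun hre => hnre (RE_prepend hst hre)⟩)
          · have := PStep_scnt hst
            omega
          · cases hst <;> exact hann
      have hm0 : Fml.mbox a ∈ X0.right := Multiset.mem_cons_of_mem hmem
      have hm1 : Fml.mbox a ∈ X1.right := hmem
      have hne0 : Nonempty (LD (VV a) X0) := by
        rcases hch X0 hst0 hm0 with h | hp
        · exact h
        · exact ⟨LD.hyp _ hp⟩
      have hne1 : Nonempty (LD (VV a) X1) := by
        rcases hch X1 hst1 hm1 with h | hp
        · exact h
        · exact ⟨LD.hyp _ hp⟩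
      obtain ⟨d0⟩ := hne0
      obtain ⟨d1⟩ := hne1
      exact ⟨LD.impL' hok hin d0 d1⟩
    · -- imp on the right
      set X0 : Sequent := ⟨φ ::ₘ X.left, X.ann, ψ ::ₘ X.right.erase (Fml.imp φ ψ)⟩ with hX0
      have hst0 : PStep X X0 := by
        have := PStep.R X.left φ ψ (X.right.erase (Fml.imp φ ψ)) X.ann
        rwa [Multiset.cons_erase hin] at this
      have hm0 : Fml.mbox a ∈ X0.right := by
        refine Multiset.mem_cons_of_mem ((Multiset.mem_erase_of_ne ?_).2 hmem)
        intro hh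
        exact Fml.noConfusion hh
      have hne0 : Nonempty (LD (VV a) X0) := by
        by_cases hpY : Prov X0
        · exact ⟨LD.hyp _ hpY⟩
        · refine IHk (scnt X0) ?_ X0 le_rfl
            ⟨hpY, PStep_ok hst0 hok, hann, hm0, fun hre => hnre (RE_prepend hst0 hre)⟩
          have := PStep_scnt hst0
          omega
      obtain ⟨d0⟩ := hne0
      exact ⟨LD.impR' hok hin d0⟩

lemma VV_prov (a : Fml) : ∀ X ∈ VV a, Prov X := fun X hX =>
  mainClosure' (VV a) (fun T hT => buildF a (scnt T) T le_rfl hT)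
    (buildF a (scnt X) X le_rfl hX)
/-! ## The truth lemma -/

theorem TL : ∀ (n : ℕ) (W : Wld) (χ : Fml), χ.size ≤ n →
    (χ ∈ W.1.left → KMc.sat W χ) ∧ (χ ∈ W.1.right → ¬ KMc.sat W χ) := by
  intro n
  induction n using Nat.strong_induction_on with
  | _ n IH =>
  intro W χ hsz
  obtain ⟨hWsat, hWok, hWnp⟩ := W.2
  cases χ with
  | var p =>
    constructor
    · intro h
      show Fml.var p ∈ W.1.left
      exact h
    · intro h hs
      have hl : Fml.var p ∈ W.1.left := hs
      exact hWnp (prov_var hWok hl h)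
  | bot =>
    constructor
    · intro h
      exact absurd (prov_bot hWok h) hWnp
    · intro _ hs
      exact hs
  | imp a b =>
    constructor
    · intro h
      exact absurd h (hWsat.1 a b)
    · intro h
      exact absurd h (hWsat.2 a b)
  | box a =>
    have hrfl : (Fml.box a).size = a.size + 1 := rfl
    have hsza : a.size < n := by omega
    constructor
    · intro h
      show ∀ v, KMc.R W v → KMc.sat v a
      intro v hR
      obtain ⟨T, hT, hch⟩ := hR
      have hmem : a ∈ T.left := by
        rw [wits_left hT]
        exact mem_ctx_of_box h
      exact (TR (fun ξ hξ => IH a.size hsza v ξ hξ) T hch a le_rfl).1 hmem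
    · intro h hs
      have hT1 : ¬ Prov (wit1 W.1.left a) := fun hp => hWnp (prov_box hWok h hp)
      obtain ⟨L, hch, hLs, hLnp, hLok⟩ :=
        descend (scnt (wit1 W.1.left a)) _ le_rfl hT1 (wit1_ok _ _)
      let v : Wld := ⟨L, hLs, hLok, hLnp⟩
      have hR : KMc.R W v := ⟨wit1 W.1.left a, ⟨a, Or.inl ⟨h, rfl⟩⟩, hch⟩
      have hv : ¬ KMc.sat v a :=
        (TR (fun ξ hξ => IH a.size hsza v ξ hξ) _ hch a le_rfl).2
          (by show a ∈ ({a} : Msf); simp)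
      exact hv (hs v hR)
  | mbox a =>
    have hrfl : (Fml.mbox a).size = a.size + 1 := rfl
    have hsza : a.size < n := by omega
    constructor
    · intro h
      show ∀ v, Relation.TransGen KMc.R W v → KMc.sat v a
      have main : ∀ (v V₁ : Wld), Relation.TransGen KMc.R V₁ v →
          Fml.mbox a ∈ V₁.1.left → KMc.sat v a := by
        intro v V₁ htr
        induction htr using Relation.TransGen.head_induction_on with
        | single hR =>
          intro hmem
          obtain ⟨T, hT, hch⟩ := hR
          have hmT : a ∈ T.left := by
            rw [wits_left hT]
            exact mem_ctx_of_mbox hmem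
          exact (TR (fun ξ hξ => IH a.size hsza v ξ hξ) T hch a le_rfl).1 hmT
        | head hR htr ih =>
          intro hmem
          obtain ⟨T, hT, hch⟩ := hR
          have h1 : Fml.mbox a ∈ T.left := by
            rw [wits_left hT]
            exact mem_ctx_mbox_of_mbox hmem
          exact ih (chain_left_mem hch (fun x y hh => Fml.noConfusion hh) h1)
      exact fun v htr => main v W htr h
    · intro h hs
      have hdi : ¬ (Prov (wit1 W.1.left a) ∧ Prov (wit2 W.1.left a)) := by
        rintro ⟨h1, h2⟩
        exact hWnp (prov_mbox hWok h h1 h2)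
      by_cases hT1 : Prov (wit1 W.1.left a)
      · have hT2 : ¬ Prov (wit2 W.1.left a) := fun h2 => hdi ⟨hT1, h2⟩
        by_cases hre : RE a (wit2 W.1.left a)
        · obtain ⟨v, htr, hv⟩ := RE_refute (fun v ξ hξ => IH a.size hsza v ξ hξ) le_rfl
            _ hre (by show Fml.mbox a ∈ ({Fml.mbox a} : Msf); simp) W
            ⟨a, Or.inr ⟨h, Or.inr rfl⟩⟩
          exact hv (hs v htr)
        · exact hT2 (VV_prov a _
            ⟨hT2, wit2_ok _ _, rfl,
              by show Fml.mbox a ∈ ({Fml.mbox a} : Msf); simp, hre⟩)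
      · obtain ⟨L, hch, hLs, hLnp, hLok⟩ :=
          descend (scnt (wit1 W.1.left a)) _ le_rfl hT1 (wit1_ok _ _)
        let v : Wld := ⟨L, hLs, hLok, hLnp⟩
        have hR : KMc.R W v := ⟨wit1 W.1.left a, ⟨a, Or.inr ⟨h, Or.inl rfl⟩⟩, hch⟩
        have hv : ¬ KMc.sat v a :=
          (TR (fun ξ hξ => IH a.size hsza v ξ hξ) _ hch a le_rfl).2
            (by show a ∈ ({a} : Msf); simp)
        exact hv (hs v (Relation.TransGen.single hR))

/-! ## Completeness -/

theorem completeness {S : Sequent} (hok : S.ok) (hnp : ¬ Prov S) : ¬ SValid S := by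
  obtain ⟨L, hch, hLs, hLnp, hLok⟩ := descend (scnt S) S le_rfl hnp hok
  let W : Wld := ⟨L, hLs, hLok, hLnp⟩
  intro hval
  apply hval KMc W
  constructor
  · intro χ hχ
    exact (TR (fun ξ hξ => TL χ.size W ξ hξ) S hch χ le_rfl).1 hχ
  · intro χ hχ
    exact (TR (fun ξ hξ => TL χ.size W ξ hξ) S hch χ le_rfl).2 hχ

end CE

/-- If `π` is a proof of `Γ ⇒_s Δ` in `G∞ℓK⁺_s + Cut` with finitely many instances of
cut, or with local cuts only, then `G∞ℓK⁺_s ⊢ Γ ⇒_s Δ`. -/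
theorem cut_elim_finitely_many_cuts (s : Ann) (Γ Δ : Msf) (π : PreProof)
    (hπ : π.IsProof) (hc : π.Concl ⟨Γ, s, Δ⟩)
    (h : {a : List ℕ | ∃ t, π.label a = some t ∧ t.isCut}.Finite ∨ π.LocalCutsOnly) :
    Provable Γ s Δ := by
  obtain ⟨t, ht, hcc⟩ := hc
  have hok : Sequent.ok ⟨Γ, s, Δ⟩ := hcc ▸ hπ.1.seqOk [] t ht
  have hval : CE.SValid ⟨Γ, s, Δ⟩ := CE.soundness π hπ ⟨t, ht, hcc⟩
  by_contra hnp
  exact CE.completeness hok hnp hval
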